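/- arXiv:2303.03618 — 3 statements merged into one kernel-verified Lean document; each statement's English description precedes it below -/
import Mathlib

section
/- Let W be a Coxeter group. For any w, u ∈ W, the Bruhat lower interval of the Demazure product satisfies [e, w ⋆ u] = { a·b : a ∈ [e, w], b ∈ [e, u] }, where [e, x] denotes the set of elements ≤ x in Bruhat order and a·b is the ordinary group product. -/
/-!
STATEMENT 1: Let `W` be a Coxeter group.  For any `w, u ∈ W`, the Bruhat lower
interval of the Demazure product satisfies
`[e, w ⋆ u] = { a * b : a ∈ [e, w], b ∈ [e, u] }`.

The Demazure product is encoded as an arbitrary associative product `star` with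
unit `1` satisfying the defining rule on simple generators, and the Bruhat
order is the reflexive-transitive closure of the relation `a → a * t` for
reflections `t` with `ℓ(a) < ℓ(a * t)`.
-/

/-- The Bruhat order on a Coxeter group. -/
def CoxeterSystem.bruhatLE {B : Type*} {W : Type*} [Group W] {M : CoxeterMatrix B}
    (cs : CoxeterSystem M W) (u w : W) : Prop :=
  Relation.ReflTransGen
    (fun a b => ∃ t : W, cs.IsReflection t ∧ b = a * t ∧ cs.length a < cs.length b) u w

/-!
Writing `w = s_i ⋆ w'` with `ℓ(w') < ℓ(w)`, associativity reduces the theorem to a single simple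
generator: the lower interval of `s_i ⋆ z` is `{1, s_i} · [e, z]`. The inclusion `⊇` is the lifting
property `y ≤ z → s_i y ≤ s_i ⋆ z`; the inclusion `⊆` says that everything below the product of a
reduced word is the product of a subword. The subword property and the lifting property are proved
by a simultaneous induction on length.

Everything rests on the strong exchange condition, for arbitrary (not necessarily reduced)
words: if `ℓ(t w) < ℓ(w)` for a reflection `t`, then `t` occurs in the left inversion sequence of
every word for `w`. It comes from the reflection cocycle `η : W → (W → ℤˣ)`, obtained by lifting
`s_i ↦ (δ_{s_i}, s_i)` to the semidirect product in which `W` acts on `W → ℤˣ` by conjugation: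
`η (π ω) t = -1` only if `t` occurs in the left inversion sequence of `ω`, and `η w t = -1`
whenever `ℓ(t w) < ℓ(w)`.
-/

open scoped List Pointwise

namespace CoxeterSystem

variable {B W : Type*} [Group W] {M : CoxeterMatrix B} (cs : CoxeterSystem M W)

local prefix:100 "s" => cs.simple
local prefix:100 "π" => cs.wordProd
local prefix:100 "ℓ" => cs.length

section ReflectionCocycle

open scoped Classical

noncomputable def conjMulAutArrow : W →* MulAut (W → ℤˣ) :=
  mulAutArrow.comp (ConjAct.toConjAct : W ≃* ConjAct W).toMonoidHom

theorem conjMulAutArrow_apply (w : W) (f : W → ℤˣ) (t : W) :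
    conjMulAutArrow w f t = f (w⁻¹ * t * w) := by
  change f ((ConjAct.toConjAct w)⁻¹ • t) = _
  simp [ConjAct.smul_def]

theorem conjMulAutArrow_mulSingle (w t : W) (ε : ℤˣ) :
    conjMulAutArrow w (Pi.mulSingle t ε) = Pi.mulSingle (w * t * w⁻¹) ε := by
  ext1 x
  rw [conjMulAutArrow_apply, Pi.mulSingle_apply, Pi.mulSingle_apply]
  congr 1
  apply propext
  constructor <;> rintro rfl <;> group

theorem simple_mul_simple_pow_conj (i j : B) (k a : ℕ) :
    (s i * s j) ^ k * ((s i * s j) ^ a * s i) * ((s i * s j) ^ k)⁻¹ =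
      (s i * s j) ^ (2 * k + a) * s i := by
  have hsemi : SemiconjBy (s i) ((s j * s i) ^ k) ((s i * s j) ^ k) :=
    SemiconjBy.pow_right (mul_assoc _ _ _).symm k
  rw [← inv_pow, mul_inv_rev, inv_simple, inv_simple, mul_assoc, mul_assoc, hsemi.eq,
    ← mul_assoc, ← mul_assoc, ← pow_add, ← pow_add]
  ring_nf

noncomputable def reflectionCocycleGen (i : B) : (W → ℤˣ) ⋊[conjMulAutArrow] W :=
  ⟨Pi.mulSingle (s i) (-1), s i⟩

theorem reflectionCocycleGen_mul_pow (i j : B) (k : ℕ) :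
    (cs.reflectionCocycleGen i * cs.reflectionCocycleGen j) ^ k =
      ⟨∏ r ∈ Finset.range (2 * k), Pi.mulSingle ((s i * s j) ^ r * s i) (-1), (s i * s j) ^ k⟩ := by
  induction k with
  | zero => ext1 <;> simp
  | succ k ih =>
    rw [pow_succ, ih]
    ext1
    · have h0 := cs.simple_mul_simple_pow_conj i j k 0
      have h1 := cs.simple_mul_simple_pow_conj i j k 1
      rw [pow_zero, one_mul, add_zero] at h0
      rw [pow_one] at h1
      rw [SemidirectProduct.mul_left, SemidirectProduct.mul_left]
      simp only [reflectionCocycleGen, map_mul, conjMulAutArrow_mulSingle, inv_simple, h0, h1]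
      rw [show 2 * (k + 1) = 2 * k + 1 + 1 by ring, Finset.prod_range_succ, Finset.prod_range_succ,
        mul_assoc]
    · rw [SemidirectProduct.mul_right, SemidirectProduct.mul_right, pow_succ]
      rfl

theorem isLiftable_reflectionCocycleGen : M.IsLiftable cs.reflectionCocycleGen := by
  intro i j
  -- `r ↦ (s i * s j) ^ r * s i` has period `M i j`, so every factor of the product occurs twice
  rw [reflectionCocycleGen_mul_pow, two_mul, Finset.prod_range_add]
  simp only [pow_add, simple_mul_simple_pow, one_mul]
  rw [← sq, show ∀ f : W → ℤˣ, f ^ 2 = 1 from fun f => funext fun t => Int.units_sq (f t)]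
  rfl

noncomputable def reflectionCocycleHom : W →* (W → ℤˣ) ⋊[conjMulAutArrow] W :=
  cs.lift ⟨cs.reflectionCocycleGen, cs.isLiftable_reflectionCocycleGen⟩

noncomputable def reflectionCocycle (w : W) : W → ℤˣ := (cs.reflectionCocycleHom w).left

local notation "η" => cs.reflectionCocycle

theorem reflectionCocycleHom_simple (i : B) :
    cs.reflectionCocycleHom (s i) = cs.reflectionCocycleGen i :=
  cs.lift_apply_simple _ i

theorem reflectionCocycleHom_right (w : W) : (cs.reflectionCocycleHom w).right = w :=
  DFunLike.congr_fun (f := SemidirectProduct.rightHom.comp cs.reflectionCocycleHom)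
    (g := MonoidHom.id W) (cs.ext_simple fun i => by
      simp [reflectionCocycleHom_simple, reflectionCocycleGen]) w

theorem reflectionCocycle_one : η 1 = 1 := by
  rw [reflectionCocycle, map_one]
  rfl

theorem reflectionCocycle_mul (a b : W) : η (a * b) = η a * conjMulAutArrow a (η b) := by
  rw [reflectionCocycle, map_mul, SemidirectProduct.mul_left, reflectionCocycleHom_right]
  rfl

theorem reflectionCocycle_mul_apply (a b t : W) :
    η (a * b) t = η a t * η b (a⁻¹ * t * a) := by
  rw [reflectionCocycle_mul, Pi.mul_apply, conjMulAutArrow_apply]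

theorem reflectionCocycle_simple (i : B) : η (s i) = Pi.mulSingle (s i) (-1) := by
  rw [reflectionCocycle, reflectionCocycleHom_simple]
  rfl

theorem reflectionCocycle_wordProd (ω : List B) :
    η (π ω) = ((cs.leftInvSeq ω).map (Pi.mulSingle · (-1))).prod := by
  induction ω with
  | nil => exact cs.reflectionCocycle_one
  | cons i ω ih =>
    rw [wordProd_cons, reflectionCocycle_mul, ih, reflectionCocycle_simple, map_list_prod,
      List.map_map, leftInvSeq, List.map_cons, List.prod_cons, List.map_map]
    congr 3
    funext t
    simp [conjMulAutArrow_mulSingle, inv_simple]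

theorem mem_leftInvSeq_of_reflectionCocycle_ne_one {ω : List B} {t : W}
    (h : η (π ω) t ≠ 1) : t ∈ cs.leftInvSeq ω := by
  contrapose! h
  rw [reflectionCocycle_wordProd, Pi.list_prod_apply, List.map_map]
  refine List.prod_eq_one fun x hx => ?_
  obtain ⟨u, hu, rfl⟩ := List.mem_map.mp hx
  exact Pi.mulSingle_eq_of_ne (ne_of_mem_of_not_mem hu h).symm _

theorem reflectionCocycle_apply_self {t : W} (ht : cs.IsReflection t) : η t t = -1 := by
  obtain ⟨w, i, rfl⟩ := ht
  set t := w * s i * w⁻¹ with htdef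
  have hconj : w⁻¹ * t * w = s i := by rw [htdef]; group
  have hcancel : η w t * η w⁻¹ (s i) = 1 := by
    rw [← hconj, ← reflectionCocycle_mul_apply, mul_inv_cancel, reflectionCocycle_one, Pi.one_apply]
  calc η t t = η (w * (s i * w⁻¹)) t := by rw [← mul_assoc]
    _ = η w t * (η (s i) (s i) * η w⁻¹ (s i)) := by
      rw [reflectionCocycle_mul_apply, reflectionCocycle_mul_apply, hconj, inv_simple,
        simple_mul_simple_self, one_mul]
    _ = -1 := by
      rw [reflectionCocycle_simple, Pi.mulSingle_eq_same, mul_left_comm, hcancel, mul_one]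

theorem reflectionCocycle_apply_eq_neg_one {t w : W} (ht : cs.IsReflection t)
    (h : ℓ (t * w) < ℓ w) : η w t = -1 := by
  by_contra hne
  have hsplit : η w t = -η (t * w) t := by
    conv_lhs => rw [← one_mul w, ← ht.mul_self, mul_assoc]
    rw [reflectionCocycle_mul_apply, cs.reflectionCocycle_apply_self ht, ht.inv, ht.mul_self,
      one_mul, neg_one_mul]
  obtain ⟨σ, hσ, hσw⟩ := cs.exists_isReduced (t * w)
  have hmem : t ∈ cs.leftInvSeq σ := by
    refine cs.mem_leftInvSeq_of_reflectionCocycle_ne_one fun h1 => hne ?_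
    rw [hsplit, hσw, h1]
  have hinv := (cs.isLeftInversion_of_mem_leftInvSeq hσ hmem).2
  rw [← hσw, ← mul_assoc, ht.mul_self, one_mul] at hinv
  omega

theorem exists_eraseIdx_of_length_mul_lt {ω : List B} {t : W} (ht : cs.IsReflection t)
    (h : ℓ (t * π ω) < ℓ (π ω)) : ∃ j, t * π ω = π (ω.eraseIdx j) := by
  have hmem := cs.mem_leftInvSeq_of_reflectionCocycle_ne_one
    (by rw [cs.reflectionCocycle_apply_eq_neg_one ht h]; exact (by decide : (-1 : ℤˣ) ≠ 1))
  obtain ⟨j, hj, rfl⟩ := List.mem_iff_getElem.mp hmem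
  exact ⟨j, by rw [← List.getD_eq_getElem _ 1 hj, getD_leftInvSeq_mul_wordProd]⟩

end ReflectionCocycle

theorem bruhatLE_refl (w : W) : cs.bruhatLE w w := Relation.ReflTransGen.refl

theorem bruhatLE.trans {cs : CoxeterSystem M W} {u v w : W} (huv : cs.bruhatLE u v)
    (hvw : cs.bruhatLE v w) : cs.bruhatLE u w :=
  Relation.ReflTransGen.trans huv hvw

theorem bruhatLE_mul_right {w t : W} (ht : cs.IsReflection t) (h : ℓ w < ℓ (w * t)) :
    cs.bruhatLE w (w * t) :=
  Relation.ReflTransGen.single ⟨t, ht, rfl, h⟩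

theorem bruhatLE_mul_left {w t : W} (ht : cs.IsReflection t) (h : ℓ w < ℓ (t * w)) :
    cs.bruhatLE w (t * w) := by
  have hconj : t * w = w * (w⁻¹ * t * w) := by group
  rw [hconj] at h ⊢
  exact cs.bruhatLE_mul_right (by simpa using ht.conj w⁻¹) h

theorem mul_left_bruhatLE {w t : W} (ht : cs.IsReflection t) (h : ℓ (t * w) < ℓ w) :
    cs.bruhatLE (t * w) w := by
  have hle := cs.bruhatLE_mul_left ht (w := t * w) (by rwa [← mul_assoc, ht.mul_self, one_mul])
  rwa [← mul_assoc, ht.mul_self, one_mul] at hle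

theorem length_le_of_bruhatLE {u w : W} (h : cs.bruhatLE u w) : ℓ u ≤ ℓ w := by
  induction h with
  | refl => exact le_rfl
  | tail _ hstep ih =>
    obtain ⟨t, -, rfl, hlt⟩ := hstep
    exact ih.trans hlt.le

theorem eq_one_of_bruhatLE_one {u : W} (h : cs.bruhatLE u 1) : u = 1 := by
  simpa using cs.length_le_of_bruhatLE h

theorem exists_sublist_of_bruhatLE_wordProd {ω : List B} {x : W} (h : cs.bruhatLE x (π ω)) :
    ∃ τ, τ <+ ω ∧ π τ = x := by
  induction h using Relation.ReflTransGen.head_induction_on with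
  | refl => exact ⟨ω, .refl ω, rfl⟩
  | @head a b hstep _ ih =>
    obtain ⟨τ, hτ, rfl⟩ := ih
    obtain ⟨t, ht, hb, hlen⟩ := hstep
    have ha : a = (π τ * t * (π τ)⁻¹) * π τ := by
      rw [inv_mul_cancel_right, hb, mul_assoc, ht.mul_self, mul_one]
    rw [ha] at hlen
    obtain ⟨j, hj⟩ := cs.exists_eraseIdx_of_length_mul_lt (ht.conj _) hlen
    exact ⟨τ.eraseIdx j, (List.eraseIdx_sublist τ j).trans hτ, by rw [← hj, ← ha]⟩

theorem isReduced_cons_iff {i : B} {ω : List B} :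
    cs.IsReduced (i :: ω) ↔ cs.IsReduced ω ∧ ℓ (π ω) < ℓ (s i * π ω) := by
  have hle := cs.length_wordProd_le ω
  rcases cs.length_simple_mul (π ω) i with hup | hdown
  · simp only [IsReduced, wordProd_cons, List.length_cons, hup]
    omega
  · simp only [IsReduced, wordProd_cons, List.length_cons]
    omega

noncomputable def demazureSimple (i : B) (v : W) : W :=
  if ℓ v < ℓ (s i * v) then s i * v else v

theorem demazureSimple_of_lt {i : B} {v : W} (h : ℓ v < ℓ (s i * v)) :
    cs.demazureSimple i v = s i * v :=
  if_pos h

theorem demazureSimple_of_not_lt {i : B} {v : W} (h : ¬ℓ v < ℓ (s i * v)) :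
    cs.demazureSimple i v = v :=
  if_neg h

theorem bruhatLE_demazureSimple (i : B) (v : W) : cs.bruhatLE v (cs.demazureSimple i v) := by
  by_cases h : ℓ v < ℓ (s i * v)
  · rw [cs.demazureSimple_of_lt h]
    exact cs.bruhatLE_mul_left (cs.isReflection_simple i) h
  · rw [cs.demazureSimple_of_not_lt h]
    exact cs.bruhatLE_refl v

theorem simple_mul_bruhatLE_demazureSimple (i : B) (v : W) :
    cs.bruhatLE (s i * v) (cs.demazureSimple i v) := by
  by_cases h : ℓ v < ℓ (s i * v)
  · rw [cs.demazureSimple_of_lt h]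
    exact cs.bruhatLE_refl _
  · rw [cs.demazureSimple_of_not_lt h]
    have := cs.length_simple_mul_ne v i
    exact cs.mul_left_bruhatLE (cs.isReflection_simple i) (by omega)

theorem bruhatLE_wordProd_of_sublist_of_lifting {ω τ : List B} (hω : cs.IsReduced ω) (hτ : τ <+ ω)
    (hlift : ∀ y z : W, ℓ z < ω.length → cs.bruhatLE y z →
      ∀ i, cs.bruhatLE (s i * y) (cs.demazureSimple i z)) :
    cs.bruhatLE (π τ) (π ω) := by
  induction ω generalizing τ with
  | nil => rw [List.sublist_nil.mp hτ]; exact cs.bruhatLE_refl _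
  | cons i σ ih =>
    obtain ⟨hσ, hasc⟩ := cs.isReduced_cons_iff.mp hω
    have ih' : ∀ τ, τ <+ σ → cs.bruhatLE (π τ) (π σ) := fun τ hτ =>
      ih hσ hτ fun y z hz => hlift y z (by simp only [List.length_cons]; omega)
    rw [wordProd_cons, ← cs.demazureSimple_of_lt hasc]
    rcases List.sublist_cons_iff.mp hτ with hτ | ⟨ρ, rfl, hρ⟩
    · exact (ih' τ hτ).trans (cs.bruhatLE_demazureSimple i _)
    · rw [wordProd_cons]
      exact hlift _ _ (by rw [hσ.eq]; simp) (ih' ρ hρ) i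

theorem simple_mul_bruhatLE_of_step {z' z t : W} (ht : cs.IsReflection t) (hz : z = z' * t)
    (hlen : ℓ z' < ℓ z) {i : B} (hdesc : ℓ (s i * z) < ℓ z)
    (hsub : ∀ σ τ : List B, cs.IsReduced σ → σ.length < ℓ z → τ <+ σ → cs.bruhatLE (π τ) (π σ)) :
    cs.bruhatLE (s i * z') z := by
  obtain ⟨σ, hσ, hσz⟩ := cs.exists_isReduced (s i * z)
  have hzσ : z = π (i :: σ) := by rw [wordProd_cons, ← hσz, simple_mul_simple_cancel_left]
  have hσlen : σ.length < ℓ z := by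
    rw [← hσ.eq, ← hσz]
    exact hdesc
  have hz' : z' = (z * t * z⁻¹) * z := by
    rw [inv_mul_cancel_right, hz, mul_assoc, ht.mul_self, mul_one]
  obtain ⟨j, hj⟩ := cs.exists_eraseIdx_of_length_mul_lt (ht.conj z)
    (by rwa [← hzσ, ← hz'] : ℓ (z * t * z⁻¹ * π (i :: σ)) < ℓ (π (i :: σ)))
  rw [← hzσ, ← hz'] at hj
  -- strong exchange in the reduced word `i :: σ` of `z`: either `z' = s i * z`, or `s i * z'` is
  -- the product of a subword of `σ`
  cases j with
  | zero =>
    rw [hj, List.eraseIdx_cons_zero, ← hσz, simple_mul_simple_cancel_left]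
    exact cs.bruhatLE_refl z
  | succ k =>
    rw [hj, List.eraseIdx_cons_succ, wordProd_cons, simple_mul_simple_cancel_left]
    refine (hsub σ _ hσ hσlen (List.eraseIdx_sublist σ k)).trans ?_
    rw [← hσz]
    exact cs.mul_left_bruhatLE (cs.isReflection_simple i) hdesc

theorem demazureSimple_mono_of_step {z' z t : W} (ht : cs.IsReflection t) (hz : z = z' * t)
    (hlen : ℓ z' < ℓ z) (i : B)
    (hsub : ∀ σ τ : List B, cs.IsReduced σ → σ.length < ℓ z → τ <+ σ → cs.bruhatLE (π τ) (π σ)) :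
    cs.bruhatLE (cs.demazureSimple i z') (cs.demazureSimple i z) := by
  have hstep : cs.bruhatLE z' z := hz ▸ cs.bruhatLE_mul_right ht (hz ▸ hlen)
  by_cases hA : ℓ z' < ℓ (s i * z')
  · rw [cs.demazureSimple_of_lt hA]
    by_cases hB : ℓ z < ℓ (s i * z)
    · rw [cs.demazureSimple_of_lt hB, hz, ← mul_assoc]
      have := cs.length_simple_mul z' i
      exact cs.bruhatLE_mul_right ht (by rw [mul_assoc, ← hz]; omega)
    · rw [cs.demazureSimple_of_not_lt hB]
      have := cs.length_simple_mul_ne z i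
      exact cs.simple_mul_bruhatLE_of_step ht hz hlen (by omega) hsub
  · rw [cs.demazureSimple_of_not_lt hA]
    exact hstep.trans (cs.bruhatLE_demazureSimple i z)

theorem bruhatLE_simple_mul_demazureSimple {y z : W} (h : cs.bruhatLE y z) (i : B) :
    cs.bruhatLE (s i * y) (cs.demazureSimple i z) := by
  induction hn : ℓ z using Nat.strong_induction_on generalizing y z i with
  | _ n ih =>
    rcases Relation.ReflTransGen.cases_tail h with rfl | ⟨z', hyz', t, ht, hz, hlen⟩
    · exact cs.simple_mul_bruhatLE_demazureSimple i _
    · refine (ih (ℓ z') (hn ▸ hlen) hyz' i rfl).trans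
        (cs.demazureSimple_mono_of_step ht hz hlen i ?_)
      exact fun σ τ hσ hσz hτ => cs.bruhatLE_wordProd_of_sublist_of_lifting hσ hτ
        fun _ _ hz'' hyz j => ih _ (by omega) hyz j rfl

theorem bruhatLE_wordProd_of_sublist {ω τ : List B} (hω : cs.IsReduced ω) (hτ : τ <+ ω) :
    cs.bruhatLE (π τ) (π ω) :=
  cs.bruhatLE_wordProd_of_sublist_of_lifting hω hτ fun _ _ _ h i =>
    cs.bruhatLE_simple_mul_demazureSimple h i

def bruhatIic (w : W) : Set W := {x | cs.bruhatLE x w}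

theorem bruhatIic_one : cs.bruhatIic 1 = {1} := by
  ext x
  exact ⟨cs.eq_one_of_bruhatLE_one, fun hx => hx ▸ cs.bruhatLE_refl 1⟩

theorem bruhatIic_demazureSimple (i : B) (z : W) :
    cs.bruhatIic (cs.demazureSimple i z) = {1, s i} * cs.bruhatIic z := by
  ext x
  simp only [bruhatIic, Set.mem_mul, Set.mem_insert_iff, Set.mem_singleton_iff, Set.mem_ofPred_eq,
    exists_eq_or_imp, exists_eq_left, one_mul, exists_eq_right]
  constructor
  · intro hx
    by_cases hasc : ℓ z < ℓ (s i * z)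
    · obtain ⟨σ, hσ, rfl⟩ := cs.exists_isReduced z
      rw [cs.demazureSimple_of_lt hasc, ← wordProd_cons] at hx
      obtain ⟨τ, hτ, rfl⟩ := cs.exists_sublist_of_bruhatLE_wordProd hx
      rcases List.sublist_cons_iff.mp hτ with hτ | ⟨ρ, rfl, hρ⟩
      · exact .inl (cs.bruhatLE_wordProd_of_sublist hσ hτ)
      · exact .inr ⟨π ρ, cs.bruhatLE_wordProd_of_sublist hσ hρ, (wordProd_cons ..).symm⟩
    · rw [cs.demazureSimple_of_not_lt hasc] at hx
      exact .inl hx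
  · rintro (hx | ⟨b, hb, rfl⟩)
    · exact hx.trans (cs.bruhatLE_demazureSimple i z)
    · exact cs.bruhatLE_simple_mul_demazureSimple hb i

end CoxeterSystem

theorem bruhat_interval_of_demazure_product
    {B : Type*} {W : Type*} [Group W] {M : CoxeterMatrix B} (cs : CoxeterSystem M W)
    (star : W → W → W)
    (hassoc : ∀ a b c : W, star (star a b) c = star a (star b c))
    (hunit : ∀ a : W, star 1 a = a)
    (hgen : ∀ (i : B) (v : W),
      star (cs.simple i) v =
        if cs.length v < cs.length (cs.simple i * v) then cs.simple i * v else v)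
    (w u : W) :
    {x : W | cs.bruhatLE x (star w u)} =
      {x : W | ∃ a b : W, cs.bruhatLE a w ∧ cs.bruhatLE b u ∧ x = a * b} := by
  have hmul : ∀ w, cs.bruhatIic (star w u) = cs.bruhatIic w * cs.bruhatIic u := by
    intro w
    induction hn : cs.length w using Nat.strong_induction_on generalizing w with
    | _ n ih =>
      rcases eq_or_ne w 1 with rfl | hne
      · rw [hunit, cs.bruhatIic_one, Set.singleton_one, one_mul]
      obtain ⟨i, hdesc⟩ := cs.exists_leftDescent_of_ne_one hne
      have hstar : ∀ v, star (cs.simple i) v = cs.demazureSimple i v := hgen i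
      have hw : star (cs.simple i) (cs.simple i * w) = w := by
        rw [hstar, cs.demazureSimple_of_lt (by rwa [cs.simple_mul_simple_cancel_left]),
          cs.simple_mul_simple_cancel_left]
      calc cs.bruhatIic (star w u)
          = cs.bruhatIic (cs.demazureSimple i (star (cs.simple i * w) u)) := by
            conv_lhs => rw [← hw]
            rw [hassoc, hstar]
        _ = {1, cs.simple i} * (cs.bruhatIic (cs.simple i * w) * cs.bruhatIic u) := by
            rw [cs.bruhatIic_demazureSimple, ih _ (hn ▸ hdesc) _ rfl]
        _ = cs.bruhatIic w * cs.bruhatIic u := by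
            rw [← mul_assoc, ← cs.bruhatIic_demazureSimple, ← hstar, hw]
  ext x
  simpa [CoxeterSystem.bruhatIic, Set.mem_mul, eq_comm] using Set.ext_iff.mp (hmul w) x
end

section
/- For any v ∈ S_n and indices 1 ≤ i ≤ j ≤ n−1, the Demazure product satisfies (s_i s_{i+1} ⋯ s_j) ⋆ v = h_{i, [i+1, i+2, …, j+1]}(s_i s_{i+1} ⋯ s_j · v), where the product inside the hopping operator is the ordinary product of permutations. -/
/-!
We model the symmetric group `S_n` as the permutations of `ℕ` that fix every
point outside `[n] = {1, …, n}`; one-line notation records the values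
`w 1, w 2, …, w n`, so `w⁻¹ q` is the position of the entry `q`.
-/

/-- `w` is an element of `S_n`: it fixes everything outside `{1, …, n}`. -/
def InSymm (n : ℕ) (w : Equiv.Perm ℕ) : Prop :=
  ∀ k : ℕ, k ∉ Finset.Icc 1 n → w k = k

/-- The simple transposition `s_i = (i, i+1)`. -/
def sA (i : ℕ) : Equiv.Perm ℕ := Equiv.swap i (i + 1)

/-- One step of the hopping algorithm: among the entries `q` of the ordered
list `L` with `q > t` lying strictly to the right of `t` in the one-line
notation of `w` (i.e. `w⁻¹ t < w⁻¹ q`), pick the one occurring furthest to the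
right in `L` (the last one in `L`), and swap it with `t`; if there is no such
entry, do nothing. -/
def hopStepA (t : ℕ) (L : List ℕ) (w : Equiv.Perm ℕ) : Equiv.Perm ℕ :=
  match (L.filter fun q => decide (t < q ∧ w⁻¹ t < w⁻¹ q)).getLast? with
  | none => w
  | some q => Equiv.swap t q * w

/-- The hopping operator `h_{t,L}`: iterate the hopping step until the process
stops, i.e. until no entry of `L` greater than `t` appears to the right of
`t`.  Each effective step moves an entry of `L` from the right of `t` to its
left, so `L.length` iterations always suffice, after which the step acts as
the identity. -/
def hopA (t : ℕ) (L : List ℕ) (w : Equiv.Perm ℕ) : Equiv.Perm ℕ :=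
  (hopStepA t L)^[L.length] w

/-- The Coxeter length of an element of `S_n`: the least length of a word in
the simple transpositions `s_1, …, s_{n-1}` expressing it. -/
noncomputable def lengthA (n : ℕ) (w : Equiv.Perm ℕ) : ℕ :=
  sInf {k | ∃ l : List ℕ, l.length = k ∧ (∀ i ∈ l, 1 ≤ i ∧ i + 1 ≤ n) ∧ (l.map sA).prod = w}

/-!
Induction on `j - i`. Write `c = s_i c'` with `c' = s_{i+1} ⋯ s_j`. As `c'` fixes `i` and moves
`i + 1` to position `j + 1`, `s_i ⋆ c' = s_i c'`, so by associativity
`c ⋆ v = s_i ⋆ (c' ⋆ v) = s_i ⋆ h_{i+1,[i+2,…,j+1]}(c' v)`. Conjugation by `s_i` turns each hop of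
`i + 1` in `x` into a hop of `i` in `s_i x`; once these are exhausted, `i` hops over `i + 1`
exactly when `s_i ⋆` does not multiply, so
`h_{i,[i+1,…,j+1]}(s_i x) = s_i ⋆ h_{i+1,[i+2,…,j+1]}(x)`.
The Demazure rule becomes "`s_k ⋆ u = s_k u` iff `k` precedes `k + 1` in `u`" after identifying
the Coxeter length with the number of inversions.
-/

open Finset

def hopCandidates (t : ℕ) (L : List ℕ) (w : Equiv.Perm ℕ) : List ℕ :=
  L.filter fun q => decide (t < q ∧ w⁻¹ t < w⁻¹ q)

section Hopping

variable {t : ℕ} {L : List ℕ} {w : Equiv.Perm ℕ}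

lemma mem_hopCandidates {q : ℕ} :
    q ∈ hopCandidates t L w ↔ q ∈ L ∧ t < q ∧ w⁻¹ t < w⁻¹ q := by
  simp [hopCandidates]

lemma hopCandidates_eq_nil_iff :
    hopCandidates t L w = [] ↔ ∀ q ∈ L, t < q → w⁻¹ q ≤ w⁻¹ t := by
  simp [hopCandidates, List.filter_eq_nil_iff]

lemma hopStepA_of_hopCandidates_eq_nil (h : hopCandidates t L w = []) :
    hopStepA t L w = w := by
  change (match (hopCandidates t L w).getLast? with
    | none => w | some q => Equiv.swap t q * w) = w
  rw [h]; rfl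

lemma hopStepA_of_getLast?_eq_some {q : ℕ} (h : (hopCandidates t L w).getLast? = some q) :
    hopStepA t L w = Equiv.swap t q * w := by
  change (match (hopCandidates t L w).getLast? with
    | none => w | some q => Equiv.swap t q * w) = _
  rw [h]

lemma length_hopCandidates_swap_mul_lt {q : ℕ} (h : (hopCandidates t L w).getLast? = some q) :
    (hopCandidates t L (Equiv.swap t q * w)).length < (hopCandidates t L w).length := by
  obtain ⟨-, htq, hwq⟩ := mem_hopCandidates.1 (List.mem_of_getLast? h)
  -- `t` moves right, to `q`'s old position, and `q` moves to the left of it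
  have hnew : ∀ a, t < a → w⁻¹ q < w⁻¹ (Equiv.swap t q a) → w⁻¹ t < w⁻¹ a := by
    intro a hta ha
    by_cases haq : a = q
    · subst haq; rw [Equiv.swap_apply_right] at ha; omega
    · rw [Equiv.swap_apply_of_ne_of_ne (by omega) haq] at ha; omega
  have hfilter : hopCandidates t L (Equiv.swap t q * w) =
      (hopCandidates t L w).filter fun a => decide (t < a ∧ w⁻¹ q < w⁻¹ (Equiv.swap t q a)) := by
    rw [hopCandidates, hopCandidates, List.filter_filter]
    refine List.filter_congr fun a _ => ?_
    rw [mul_inv_rev, Equiv.swap_inv, Equiv.Perm.mul_apply, Equiv.Perm.mul_apply,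
      Equiv.swap_apply_left, ← Bool.decide_and, decide_eq_decide]
    exact ⟨fun ha => ⟨ha, ha.1, hnew a ha.1 ha.2⟩, And.left⟩
  rw [hfilter, List.length_filter_lt_length_iff_exists]
  exact ⟨q, List.mem_of_getLast? h, by simp only [decide_eq_true_eq, Equiv.swap_apply_right]; omega⟩

lemma hopStepA_iterate_fixed (k : ℕ) (hk : (hopCandidates t L w).length ≤ k) :
    hopStepA t L ((hopStepA t L)^[k] w) = (hopStepA t L)^[k] w := by
  induction k generalizing w with
  | zero => exact hopStepA_of_hopCandidates_eq_nil (List.length_eq_zero_iff.1 (Nat.le_zero.1 hk))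
  | succ k ih =>
    rcases hlast : (hopCandidates t L w).getLast? with _ | q
    · have hfix := hopStepA_of_hopCandidates_eq_nil (List.getLast?_eq_none_iff.1 hlast)
      rw [Function.iterate_fixed hfix, hfix]
    · rw [Function.iterate_succ_apply, hopStepA_of_getLast?_eq_some hlast]
      exact ih (by have := length_hopCandidates_swap_mul_lt hlast; omega)

lemma hopA_hopStepA : hopA t L (hopStepA t L w) = hopA t L w := by
  rw [hopA, hopA, ← Function.iterate_succ_apply, Function.iterate_succ_apply']
  exact hopStepA_iterate_fixed _ (List.length_filter_le _ _)

lemma hopA_of_hopCandidates_eq_nil (h : hopCandidates t L w = []) : hopA t L w = w :=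
  Function.iterate_fixed (hopStepA_of_hopCandidates_eq_nil h) _

end Hopping

section InSymm

variable {n : ℕ}

lemma InSymm.mul {a b : Equiv.Perm ℕ} (ha : InSymm n a) (hb : InSymm n b) :
    InSymm n (a * b) := fun k hk => by
  rw [Equiv.Perm.mul_apply, hb k hk, ha k hk]

lemma InSymm.inv {u : Equiv.Perm ℕ} (hu : InSymm n u) : InSymm n u⁻¹ := fun k hk => by
  rw [Equiv.Perm.inv_eq_iff_eq, hu k hk]

lemma inSymm_swap {a b : ℕ} (ha : a ∈ Icc 1 n) (hb : b ∈ Icc 1 n) :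
    InSymm n (Equiv.swap a b) := fun k hk =>
  Equiv.swap_apply_of_ne_of_ne (by rintro rfl; exact hk ha) (by rintro rfl; exact hk hb)

lemma inSymm_sA {k : ℕ} (hk : 1 ≤ k) (hkn : k + 1 ≤ n) : InSymm n (sA k) :=
  inSymm_swap (mem_Icc.2 ⟨hk, by omega⟩) (mem_Icc.2 ⟨by omega, hkn⟩)

variable {t : ℕ} {L : List ℕ} {w : Equiv.Perm ℕ}

lemma inSymm_hopStepA (hL : ∀ q ∈ L, q ∈ Icc 1 n) (ht : t ∈ Icc 1 n) (hw : InSymm n w) :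
    InSymm n (hopStepA t L w) := by
  rcases hlast : (hopCandidates t L w).getLast? with _ | q
  · rwa [hopStepA_of_hopCandidates_eq_nil (List.getLast?_eq_none_iff.1 hlast)]
  · rw [hopStepA_of_getLast?_eq_some hlast]
    exact (inSymm_swap ht (hL q (mem_hopCandidates.1 (List.mem_of_getLast? hlast)).1)).mul hw

lemma inSymm_hopA (hL : ∀ q ∈ L, q ∈ Icc 1 n) (ht : t ∈ Icc 1 n) (hw : InSymm n w) :
    InSymm n (hopA t L w) := by
  rw [hopA]
  induction L.length with
  | zero => exact hw
  | succ k ih => rw [Function.iterate_succ_apply']; exact inSymm_hopStepA hL ht ih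

end InSymm

section Length

variable {n k : ℕ}

/-- Inversions are recorded by values: `a < b` with `b` to the left of `a`. -/
def invCount (n : ℕ) (u : Equiv.Perm ℕ) : ℕ :=
  #{p ∈ Icc 1 n ×ˢ Icc 1 n | p.1 < p.2 ∧ u⁻¹ p.2 < u⁻¹ p.1}

lemma invCount_one : invCount n 1 = 0 := by
  simp only [invCount, inv_one, Equiv.Perm.one_apply, card_eq_zero, filter_eq_empty_iff]
  omega

lemma sA_sA_apply (k a : ℕ) : sA k (sA k a) = a := Equiv.swap_apply_self _ _ _

lemma sA_mul_sA_mul (u : Equiv.Perm ℕ) : sA k * (sA k * u) = u := by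
  rw [← mul_assoc, sA, Equiv.swap_mul_self, one_mul]

lemma inv_sA_mul_apply (u : Equiv.Perm ℕ) (a : ℕ) : (sA k * u)⁻¹ a = u⁻¹ (sA k a) := by
  rw [mul_inv_rev, sA, Equiv.swap_inv, Equiv.Perm.mul_apply]

lemma sA_mem_Icc {a : ℕ} (hk : 1 ≤ k) (hkn : k + 1 ≤ n) (ha : a ∈ Icc 1 n) :
    sA k a ∈ Icc 1 n := by
  rw [mem_Icc] at ha ⊢
  simp only [sA, Equiv.swap_apply_def]
  split_ifs <;> omega

lemma sA_lt_sA_iff {a b : ℕ} (h : ¬(a = k ∧ b = k + 1)) (h' : ¬(a = k + 1 ∧ b = k)) :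
    sA k a < sA k b ↔ a < b := by
  simp only [sA, Equiv.swap_apply_def]
  split_ifs <;> omega

lemma invCount_sA_mul_of_lt (hk : 1 ≤ k) (hkn : k + 1 ≤ n) {u : Equiv.Perm ℕ}
    (hu : u⁻¹ k < u⁻¹ (k + 1)) : invCount n (sA k * u) = invCount n u + 1 := by
  set S := Icc 1 n ×ˢ Icc 1 n
  -- relabel the values by `s_k`: only the pair `(k + 1, k)` changes status
  have hrelabel : invCount n (sA k * u) = #{p ∈ S | sA k p.1 < sA k p.2 ∧ u⁻¹ p.2 < u⁻¹ p.1} := by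
    refine card_nbij' (fun p => (sA k p.1, sA k p.2)) (fun p => (sA k p.1, sA k p.2))
      ?_ ?_ (fun p _ => by simp [sA_sA_apply]) (fun p _ => by simp [sA_sA_apply])
    all_goals
      rintro ⟨a, b⟩ hab
      simp only [S, coe_filter, Set.mem_ofPred_eq, mem_product, inv_sA_mul_apply,
        sA_sA_apply] at hab ⊢
      exact ⟨⟨sA_mem_Icc hk hkn hab.1.1, sA_mem_Icc hk hkn hab.1.2⟩, hab.2⟩
  have hinsert : ({p ∈ S | sA k p.1 < sA k p.2 ∧ u⁻¹ p.2 < u⁻¹ p.1} : Finset (ℕ × ℕ)) =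
      insert (k + 1, k) {p ∈ S | p.1 < p.2 ∧ u⁻¹ p.2 < u⁻¹ p.1} := by
    ext ⟨a, b⟩
    simp only [mem_filter, mem_insert, Prod.mk.injEq]
    by_cases h' : a = k + 1 ∧ b = k
    · obtain ⟨rfl, rfl⟩ := h'
      simp [S, sA, hu, hk, hkn, -Equiv.Perm.coe_inv]
      omega
    by_cases h : a = k ∧ b = k + 1
    · obtain ⟨rfl, rfl⟩ := h
      simp [sA, -Equiv.Perm.coe_inv]
      omega
    · rw [sA_lt_sA_iff h h']
      simp [h']
  rw [hrelabel, hinsert, card_insert_of_notMem (by simp), invCount]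

lemma invCount_sA_mul_of_gt (hk : 1 ≤ k) (hkn : k + 1 ≤ n) {u : Equiv.Perm ℕ}
    (hu : u⁻¹ (k + 1) < u⁻¹ k) : invCount n u = invCount n (sA k * u) + 1 := by
  have h := invCount_sA_mul_of_lt (n := n) hk hkn (u := sA k * u)
    (by rwa [inv_sA_mul_apply, inv_sA_mul_apply, sA, Equiv.swap_apply_left,
      Equiv.swap_apply_right])
  rwa [sA_mul_sA_mul] at h

lemma invCount_prod_le_length {l : List ℕ} (hl : ∀ i ∈ l, 1 ≤ i ∧ i + 1 ≤ n) :
    invCount n (l.map sA).prod ≤ l.length := by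
  induction l with
  | nil => simp [invCount_one]
  | cons k l ih =>
    obtain ⟨hk, hkn⟩ := hl k List.mem_cons_self
    have hrest := ih fun i hi => hl i (List.mem_cons_of_mem k hi)
    rw [List.map_cons, List.prod_cons, List.length_cons]
    set r := (l.map sA).prod
    rcases lt_or_gt_of_ne (r⁻¹.injective.ne (by omega : k ≠ k + 1)) with h | h
    · rw [invCount_sA_mul_of_lt hk hkn h]; omega
    · have := invCount_sA_mul_of_gt (n := n) hk hkn h; omega

lemma exists_descent {u : Equiv.Perm ℕ} (hu : InSymm n u) (hne : u ≠ 1) :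
    ∃ k, 1 ≤ k ∧ k + 1 ≤ n ∧ u⁻¹ (k + 1) < u⁻¹ k := by
  by_contra! hasc
  replace hasc : ∀ k, 1 ≤ k → k + 1 ≤ n → u⁻¹ k < u⁻¹ (k + 1) := fun k hk hkn =>
    lt_of_le_of_ne (hasc k hk hkn) (u⁻¹.injective.ne (by omega : k ≠ k + 1))
  have hge : ∀ k ≤ n, k ≤ u⁻¹ k := by
    intro k hkn
    induction k with
    | zero => exact Nat.zero_le _
    | succ k ih =>
      rcases Nat.eq_zero_or_pos k with rfl | hk
      · have h0 : u⁻¹ 0 = 0 := hu.inv 0 (by simp)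
        exact Nat.one_le_iff_ne_zero.2 fun h1 => one_ne_zero (u⁻¹.injective (h1.trans h0.symm))
      · have := hasc k hk hkn; have := ih (by omega); omega
  -- `u⁻¹` permutes `[n]` and dominates the identity there, hence is the identity
  have hsum : ∑ x ∈ Icc 1 n, u⁻¹ x = ∑ x ∈ Icc 1 n, x :=
    Equiv.Perm.sum_comp u⁻¹ _ id fun x hx => by_contra fun h => hx (hu.inv x h)
  have hfix := (sum_eq_sum_iff_of_le fun x hx => hge x (mem_Icc.1 hx).2).1 hsum.symm
  apply hne
  rw [← inv_eq_one]
  ext x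
  by_cases hx : x ∈ Icc 1 n
  · exact (hfix x hx).symm
  · exact hu.inv x hx

lemma exists_word_length_eq_invCount {u : Equiv.Perm ℕ} (hu : InSymm n u) :
    ∃ l : List ℕ, l.length = invCount n u ∧ (∀ i ∈ l, 1 ≤ i ∧ i + 1 ≤ n) ∧ (l.map sA).prod = u := by
  induction hN : invCount n u generalizing u with
  | zero =>
    by_cases h1 : u = 1
    · exact ⟨[], rfl, by simp, by simp [h1]⟩
    obtain ⟨k, hk, hkn, hd⟩ := exists_descent hu h1
    have := invCount_sA_mul_of_gt (n := n) hk hkn hd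
    omega
  | succ N ih =>
    have h1 : u ≠ 1 := by rintro rfl; simp [invCount_one] at hN
    obtain ⟨k, hk, hkn, hd⟩ := exists_descent hu h1
    obtain ⟨l, hlen, hl, hprod⟩ := ih ((inSymm_sA hk hkn).mul hu)
      (by have := invCount_sA_mul_of_gt (n := n) hk hkn hd; omega)
    refine ⟨k :: l, by simp [hlen], List.forall_mem_cons.2 ⟨⟨hk, hkn⟩, hl⟩, ?_⟩
    rw [List.map_cons, List.prod_cons, hprod, sA_mul_sA_mul]

lemma lengthA_eq_invCount {u : Equiv.Perm ℕ} (hu : InSymm n u) : lengthA n u = invCount n u := by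
  obtain ⟨l, hlen, hl, hprod⟩ := exists_word_length_eq_invCount hu
  refine le_antisymm (Nat.sInf_le ⟨l, hlen, hl, hprod⟩) (le_csInf ⟨_, l, hlen, hl, hprod⟩ ?_)
  rintro _ ⟨l', rfl, hl', rfl⟩
  exact invCount_prod_le_length hl'

lemma lengthA_lt_lengthA_sA_mul_iff {u : Equiv.Perm ℕ} (hu : InSymm n u) (hk : 1 ≤ k)
    (hkn : k + 1 ≤ n) : lengthA n u < lengthA n (sA k * u) ↔ u⁻¹ k < u⁻¹ (k + 1) := by
  rw [lengthA_eq_invCount hu, lengthA_eq_invCount ((inSymm_sA hk hkn).mul hu)]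
  rcases lt_or_gt_of_ne (u⁻¹.injective.ne (by omega : k ≠ k + 1)) with h | h
  · rw [invCount_sA_mul_of_lt hk hkn h]; simpa using h
  · rw [invCount_sA_mul_of_gt hk hkn h]; simp only [h.not_gt, iff_false]; omega

end Length

/-- `s_k ⋆ u`, in the form the Demazure rule takes once length is read off inversions. -/
def demazureSA (k : ℕ) (u : Equiv.Perm ℕ) : Equiv.Perm ℕ :=
  if u⁻¹ k < u⁻¹ (k + 1) then sA k * u else u

lemma ite_lengthA_eq_demazureSA {n k : ℕ} {u : Equiv.Perm ℕ} (hu : InSymm n u) (hk : 1 ≤ k)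
    (hkn : k + 1 ≤ n) :
    (if lengthA n u < lengthA n (sA k * u) then sA k * u else u) = demazureSA k u := by
  simp only [demazureSA, lengthA_lt_lengthA_sA_mul_iff hu hk hkn]

def hopList (t d : ℕ) : List ℕ := (List.range d).map fun k => t + 1 + k

section HopList

variable {i d : ℕ}

lemma hopList_succ (t d : ℕ) : hopList t (d + 1) = (t + 1) :: hopList (t + 1) d := by
  simp only [hopList, List.range_succ_eq_map, List.map_cons, List.map_map]
  congr 2
  ext k
  simp only [Function.comp_apply]
  omega

lemma mem_hopList {t q : ℕ} : q ∈ hopList t d ↔ t < q ∧ q ≤ t + d := by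
  simp only [hopList, List.mem_map, List.mem_range]
  constructor
  · rintro ⟨k, hk, rfl⟩; omega
  · rintro ⟨h1, h2⟩; exact ⟨q - (t + 1), by omega, by omega⟩

lemma hopCandidates_hopList_sA_mul (x : Equiv.Perm ℕ) :
    hopCandidates i (hopList i (d + 1)) (sA i * x) =
      (if x⁻¹ (i + 1) < x⁻¹ i then [i + 1] else []) ++
        hopCandidates (i + 1) (hopList (i + 1) d) x := by
  have htail :
      (hopList (i + 1) d).filter (fun q => decide (i < q ∧ (sA i * x)⁻¹ i < (sA i * x)⁻¹ q)) =
        hopCandidates (i + 1) (hopList (i + 1) d) x := List.filter_congr fun q hq => by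
    obtain ⟨hq, -⟩ := mem_hopList.1 hq
    rw [inv_sA_mul_apply, inv_sA_mul_apply, sA, Equiv.swap_apply_left,
      Equiv.swap_apply_of_ne_of_ne (by omega) (by omega), decide_eq_decide]
    exact ⟨fun h => ⟨hq, h.2⟩, fun h => ⟨by omega, h.2⟩⟩
  rw [hopCandidates, hopList_succ, List.filter_cons, htail, inv_sA_mul_apply, inv_sA_mul_apply, sA,
    Equiv.swap_apply_left, Equiv.swap_apply_right]
  by_cases h : x⁻¹ (i + 1) < x⁻¹ i <;> simp [h, -Equiv.Perm.coe_inv]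

lemma hopA_hopList_sA_mul_of_hopCandidates_eq_nil {x : Equiv.Perm ℕ}
    (h : hopCandidates (i + 1) (hopList (i + 1) d) x = []) :
    hopA i (hopList i (d + 1)) (sA i * x) = demazureSA i x := by
  have hcand := hopCandidates_hopList_sA_mul (i := i) (d := d) x
  rw [h, List.append_nil] at hcand
  rcases lt_or_gt_of_ne (x⁻¹.injective.ne (by omega : i ≠ i + 1)) with hlt | hgt
  · rw [hopA_of_hopCandidates_eq_nil (by rw [hcand, if_neg hlt.asymm]), demazureSA, if_pos hlt]
  · have hstep : hopStepA i (hopList i (d + 1)) (sA i * x) = x := by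
      rw [hopStepA_of_getLast?_eq_some (q := i + 1) (by rw [hcand, if_pos hgt]; rfl),
        ← sA, sA_mul_sA_mul]
    have hdone : hopCandidates i (hopList i (d + 1)) x = [] := by
      refine hopCandidates_eq_nil_iff.2 fun q hq hiq => ?_
      obtain ⟨-, hqd⟩ := mem_hopList.1 hq
      rcases eq_or_lt_of_le (show i + 1 ≤ q by omega) with rfl | hq'
      · exact hgt.le
      · have := hopCandidates_eq_nil_iff.1 h q (mem_hopList.2 ⟨hq', by omega⟩) hq'
        omega
    rw [← hopA_hopStepA, hstep, hopA_of_hopCandidates_eq_nil hdone, demazureSA, if_neg hgt.asymm]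

lemma hopA_hopList_sA_mul (x : Equiv.Perm ℕ) :
    hopA i (hopList i (d + 1)) (sA i * x) = demazureSA i (hopA (i + 1) (hopList (i + 1) d) x) := by
  induction hN : (hopCandidates (i + 1) (hopList (i + 1) d) x).length
    using Nat.strong_induction_on generalizing x with
  | _ N ih =>
  rcases hlast : (hopCandidates (i + 1) (hopList (i + 1) d) x).getLast? with _ | q
  · have hnil := List.getLast?_eq_none_iff.1 hlast
    rw [hopA_of_hopCandidates_eq_nil hnil, hopA_hopList_sA_mul_of_hopCandidates_eq_nil hnil]
  have hq := List.mem_of_getLast? hlast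
  obtain ⟨-, hiq, -⟩ := mem_hopCandidates.1 hq
  have hlast' : (hopCandidates i (hopList i (d + 1)) (sA i * x)).getLast? = some q := by
    rwa [hopCandidates_hopList_sA_mul, List.getLast?_append_of_ne_nil _ (List.ne_nil_of_mem hq)]
  have hconj : Equiv.swap i q = sA i * Equiv.swap (i + 1) q * (sA i)⁻¹ := by
    rw [← Equiv.swap_apply_apply, sA, Equiv.swap_apply_right,
      Equiv.swap_apply_of_ne_of_ne (by omega) (by omega)]
  have hswap : Equiv.swap i q * (sA i * x) = sA i * (Equiv.swap (i + 1) q * x) := by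
    rw [hconj]; group
  rw [← hopA_hopStepA, hopStepA_of_getLast?_eq_some hlast', hswap, ← hopA_hopStepA (t := i + 1),
    hopStepA_of_getLast?_eq_some hlast]
  exact ih _ (hN ▸ length_hopCandidates_swap_mul_lt hlast) _ rfl

end HopList

def cycleA (i d : ℕ) : Equiv.Perm ℕ := ((List.range (d + 1)).map fun k => sA (i + k)).prod

lemma cycleA_zero (i : ℕ) : cycleA i 0 = sA i := by simp [cycleA]

lemma cycleA_succ (i d : ℕ) : cycleA i (d + 1) = sA i * cycleA (i + 1) d := by
  rw [cycleA, List.range_succ_eq_map, List.map_cons, List.prod_cons, List.map_map, cycleA]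
  congr 2
  refine List.map_congr_left fun k _ => ?_
  simp only [Function.comp_apply, Nat.succ_eq_add_one]
  congr 1
  omega

lemma cycleA_apply_of_lt {i k : ℕ} (d : ℕ) (h : k < i) : cycleA i d k = k := by
  induction d generalizing i with
  | zero => exact Equiv.swap_apply_of_ne_of_ne (by omega) (by omega)
  | succ d ih =>
    rw [cycleA_succ, Equiv.Perm.mul_apply, ih (by omega)]
    exact Equiv.swap_apply_of_ne_of_ne (by omega) (by omega)

lemma cycleA_apply_add_add_one (i d : ℕ) : cycleA i d (i + d + 1) = i := by
  induction d generalizing i with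
  | zero => exact Equiv.swap_apply_right _ _
  | succ d ih =>
    rw [cycleA_succ, Equiv.Perm.mul_apply, show i + (d + 1) + 1 = i + 1 + d + 1 by omega, ih]
    exact Equiv.swap_apply_right _ _

lemma inSymm_cycleA {n i d : ℕ} (hi : 1 ≤ i) (hn : i + d + 1 ≤ n) : InSymm n (cycleA i d) := by
  induction d generalizing i with
  | zero => exact cycleA_zero i ▸ inSymm_sA hi hn
  | succ d ih => exact cycleA_succ i d ▸ (inSymm_sA hi (by omega)).mul (ih (by omega) (by omega))

lemma demazureSA_cycleA (i d : ℕ) : demazureSA i (cycleA (i + 1) d) = cycleA i (d + 1) := by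
  have hi : (cycleA (i + 1) d)⁻¹ i = i :=
    Equiv.Perm.inv_eq_iff_eq.2 (cycleA_apply_of_lt d (Nat.lt_succ_self i)).symm
  have hi' : (cycleA (i + 1) d)⁻¹ (i + 1) = i + 1 + d + 1 :=
    Equiv.Perm.inv_eq_iff_eq.2 (cycleA_apply_add_add_one (i + 1) d).symm
  rw [demazureSA, hi, hi', if_pos (by omega), cycleA_succ]

theorem star_cycleA {n : ℕ} (star : Equiv.Perm ℕ → Equiv.Perm ℕ → Equiv.Perm ℕ)
    (hassoc : ∀ a b c, star (star a b) c = star a (star b c))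
    (hstar : ∀ k, 1 ≤ k → k + 1 ≤ n → ∀ u, InSymm n u → star (sA k) u = demazureSA k u)
    {v : Equiv.Perm ℕ} (hv : InSymm n v) {i d : ℕ} (hi : 1 ≤ i) (hn : i + d + 1 ≤ n) :
    star (cycleA i d) v = hopA i (hopList i (d + 1)) (cycleA i d * v) := by
  induction d generalizing i with
  | zero =>
    rw [cycleA_zero, hstar i hi hn v hv, hopA_hopList_sA_mul_of_hopCandidates_eq_nil rfl]
  | succ d ih =>
    have hL : ∀ q ∈ hopList (i + 1) (d + 1), q ∈ Icc 1 n := fun q hq => by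
      rw [mem_hopList] at hq; exact mem_Icc.2 ⟨by omega, by omega⟩
    have hx : InSymm n (cycleA (i + 1) d * v) := (inSymm_cycleA (by omega) (by omega)).mul hv
    calc star (cycleA i (d + 1)) v
        = star (star (sA i) (cycleA (i + 1) d)) v := by
          rw [hstar i hi (by omega) _ (inSymm_cycleA (by omega) (by omega)), demazureSA_cycleA]
      _ = star (sA i) (hopA (i + 1) (hopList (i + 1) (d + 1)) (cycleA (i + 1) d * v)) := by
          rw [hassoc, ih (by omega) (by omega)]
      _ = demazureSA i (hopA (i + 1) (hopList (i + 1) (d + 1)) (cycleA (i + 1) d * v)) :=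
          hstar i hi (by omega) _ (inSymm_hopA hL (mem_Icc.2 ⟨by omega, by omega⟩) hx)
      _ = hopA i (hopList i (d + 1 + 1)) (cycleA i (d + 1) * v) := by
          rw [← hopA_hopList_sA_mul, cycleA_succ, mul_assoc]

/-- The Demazure product `⋆` is encoded as any associative product `star` satisfying the defining
rule on the simple generators of `S_n`. -/
theorem demazure_cycle_hop_general
    (n : ℕ) (v : Equiv.Perm ℕ) (hv : InSymm n v)
    (star : Equiv.Perm ℕ → Equiv.Perm ℕ → Equiv.Perm ℕ)
    (hassoc : ∀ a b c, star (star a b) c = star a (star b c))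
    (hgen : ∀ k, 1 ≤ k → k + 1 ≤ n → ∀ u,
      star (sA k) u = if lengthA n u < lengthA n (sA k * u) then sA k * u else u)
    (i j : ℕ) (hi : 1 ≤ i) (hij : i ≤ j) (hj : j + 1 ≤ n) :
    star (((List.range (j - i + 1)).map fun k => sA (i + k)).prod) v =
      hopA i ((List.range (j - i + 1)).map fun k => i + 1 + k)
        ((((List.range (j - i + 1)).map fun k => sA (i + k)).prod) * v) := by
  obtain ⟨d, rfl⟩ : ∃ d, j = i + d := ⟨j - i, by omega⟩
  rw [show i + d - i + 1 = d + 1 by omega]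
  exact star_cycleA star hassoc
    (fun k hk hkn u hu => (hgen k hk hkn u).trans (ite_lengthA_eq_demazureSA hu hk hkn)) hv hi
    (by omega)

/-- `(s_i s_{i+1} ⋯ s_j) ⋆ v = h_{i,[i+1,…,j+1]}(s_i s_{i+1} ⋯ s_j · v)`
for `1 ≤ i ≤ j ≤ n - 1`.  The Demazure product `⋆` is encoded as an arbitrary
associative product `star` with unit `1` satisfying the defining rule on the
simple generators of `S_n`. -/
theorem demazure_cycle_hop
    (n : ℕ) (v : Equiv.Perm ℕ) (hv : InSymm n v)
    (star : Equiv.Perm ℕ → Equiv.Perm ℕ → Equiv.Perm ℕ)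
    (hassoc : ∀ a b c, star (star a b) c = star a (star b c))
    (hunit : ∀ a, star 1 a = a)
    (hgen : ∀ k, 1 ≤ k → k + 1 ≤ n → ∀ u,
      star (sA k) u = if lengthA n u < lengthA n (sA k * u) then sA k * u else u)
    (i j : ℕ) (hi : 1 ≤ i) (hij : i ≤ j) (hj : j + 1 ≤ n) :
    star (((List.range (j - i + 1)).map fun k => sA (i + k)).prod) v =
      hopA i ((List.range (j - i + 1)).map fun k => i + 1 + k)
        ((((List.range (j - i + 1)).map fun k => sA (i + k)).prod) * v) :=
  demazure_cycle_hop_general n v hv star hassoc hgen i j hi hij hj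
end

section
/- For any signed permutations w, v ∈ B_n, the Demazure product in B_n satisfies w ⋆_B v = fold(unfold(w) ⋆_A unfold(v)), where ⋆_A is the Demazure product of the symmetric group S_{2n} and unfold : B_n → S_{2n} is the standard embedding of signed permutations; in particular unfold(w) ⋆_A unfold(v) lies in the image of unfold. -/
/-!
We model the group `B_n` of signed permutations as the permutations `w` of `ℤ`
satisfying `w (-i) = -(w i)` that fix every point outside
`±[n] = {1, …, n, -1, …, -n}`.  The unfolding of `w` is the sequence
`w 1, …, w n, -(w n), …, -(w 1)`, indexed by positions `1, …, 2n`; identifying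
the position/symbol `n + k` with `-(n + 1 - k)`, the entry of the unfolding at
position `m` is `w (valB n m)`, and the entry `x` sits at position
`posB n w x`.  The total order `1 < 2 < ⋯ < n < -n < ⋯ < -2 < -1` on `±[n]`
is comparison of `ordVal`.
-/

/-- `w` is a signed permutation in `B_n`. -/
def IsSignedPerm (n : ℕ) (w : Equiv.Perm ℤ) : Prop :=
  (∀ i : ℤ, w (-i) = -(w i)) ∧ ∀ i : ℤ, (n : ℤ) < |i| → w i = i

/-- `x` is an element of `±[n]`. -/
def IsPM (n : ℕ) (x : ℤ) : Prop := x ≠ 0 ∧ |x| ≤ (n : ℤ)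

/-- The element of `±[n]` denoted by the symbol `m ∈ {1, …, 2n}`:
`m` itself if `m ≤ n`, and `-(2n + 1 - m)` otherwise. -/
def valB (n : ℕ) (m : ℕ) : ℤ :=
  if (m : ℤ) ≤ (n : ℤ) then (m : ℤ) else (m : ℤ) - (2 * n + 1)

/-- The rank of `x ∈ ±[n]` in the total order `1 < ⋯ < n < -n < ⋯ < -1`. -/
def ordVal (n : ℕ) (x : ℤ) : ℤ := if 0 < x then x else 2 * n + 1 + x

/-- The simple generators of `B_n`: `s_i` swaps `i ↔ i+1` and `-i ↔ -(i+1)`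
for `1 ≤ i < n`, and `s_n` swaps `n ↔ -n`; for `n < i` we use the convention
`s_{n+j} = s_{n-j}`. -/
def sB (n i : ℕ) : Equiv.Perm ℤ :=
  let j := if i ≤ n then i else 2 * n - i
  if j = n then Equiv.swap (n : ℤ) (-(n : ℤ))
  else Equiv.swap (j : ℤ) ((j : ℤ) + 1) * Equiv.swap (-(j : ℤ)) (-((j : ℤ) + 1))

/-- Swap the values `t ↔ q` and simultaneously `-t ↔ -q` (unless `t = -q`). -/
def bswap (t q : ℤ) : Equiv.Perm ℤ :=
  if t = -q then Equiv.swap t q else Equiv.swap t q * Equiv.swap (-t) (-q)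

/-- The position of the entry `x` in the unfolding of `w`. -/
def posB (n : ℕ) (w : Equiv.Perm ℤ) (x : ℤ) : ℤ := ordVal n (w⁻¹ x)

/-- One step of the type `B` hopping algorithm: among the entries `q` of the
ordered list `L` that are greater than `t` in the order on `±[n]` and appear
strictly to the right of `t` in the unfolding of `w`, pick the one occurring
furthest to the right in `L` (the last one in `L`), swap it with `t` and
simultaneously swap `-q` with `-t`; if there is no such entry, do nothing. -/
def hopStepB (n : ℕ) (t : ℤ) (L : List ℤ) (w : Equiv.Perm ℤ) : Equiv.Perm ℤ :=
  match (L.filter fun q =>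
      decide (ordVal n t < ordVal n q ∧ posB n w t < posB n w q)).getLast? with
  | none => w
  | some q => bswap t q * w

/-- The type `B` hopping operator `h^B_{t,L}`: iterate the hopping step until
the process stops, i.e. until no entry of `L` greater than `t` appears to the
right of `t`.  Each effective step moves `t` strictly to the right among the
`2n` positions of the unfolding, so `2n` iterations always suffice, after
which the step acts as the identity. -/
def hopB (n : ℕ) (t : ℤ) (L : List ℤ) (w : Equiv.Perm ℤ) : Equiv.Perm ℤ :=
  (hopStepB n t L)^[2 * n] w

/-- The product `c^B_{a,b} = s_a s_{a+1} ⋯ s_{a+b-1}` (the identity when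
`b = 0`), using the convention `s_{n+j} = s_{n-j}`. -/
def cB (n a b : ℕ) : Equiv.Perm ℤ := ((List.range b).map fun k => sB n (a + k)).prod

/-- The Coxeter length of an element of `B_n`: the least length of a word in
the simple generators `s_1, …, s_n` expressing it. -/
noncomputable def lengthB (n : ℕ) (w : Equiv.Perm ℤ) : ℕ :=
  sInf {k | ∃ l : List ℕ, l.length = k ∧ (∀ i ∈ l, 1 ≤ i ∧ i ≤ n) ∧ (l.map (sB n)).prod = w}

/-!
Under the identification `-i ↔ 2n + 1 - i` of `±[n]` with `{1, …, 2n}`, the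
unfolding embedding `B_n ↪ S_{2n}` is simply the inclusion of the signed
permutations of `±[n]` into all permutations of `±[n]` (and `fold` is its
inverse on its image).  So `S_{2n}` is modelled as the permutations of `ℤ`
fixing everything outside `±[n]`, with simple transpositions
`s'_k = (valB n k, valB n (k+1))` for `1 ≤ k ≤ 2n - 1`, and both `unfold` and
`fold` become the identity map.
-/

/-- The simple transpositions of `S_{2n}` acting on `±[n]`: `s'_k` swaps the
symbols `k` and `k + 1`. -/
def sA2 (n k : ℕ) : Equiv.Perm ℤ := Equiv.swap (valB n k) (valB n (k + 1))

/-- The Coxeter length on `S_{2n}`: the least length of a word in the simple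
transpositions `s'_1, …, s'_{2n-1}` expressing the given permutation. -/
noncomputable def lengthA2 (n : ℕ) (w : Equiv.Perm ℤ) : ℕ :=
  sInf {k | ∃ l : List ℕ, l.length = k ∧ (∀ i ∈ l, 1 ≤ i ∧ i + 1 ≤ 2 * n) ∧
    (l.map (sA2 n)).prod = w}

/-!
Both Demazure products are determined by the rule for a simple generator acting on the left, so
by induction on the `B_n`-length of `w` it suffices to show `s_i ⋆_B u = s'_i ⋆_A (s'_{2n-i} ⋆_A u)`
for signed `u` and `1 ≤ i ≤ n` (for `i = n` the right side is `s'_n ⋆_A s'_n ⋆_A u = s'_n ⋆_A u`).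
In both groups the rule is decided by the same test, whether the symbol `k` stands to the left of
`k + 1` in the unfolding of `u`: this comes from the length formulas `ℓ_A = inv` and
`2 ℓ_B = inv + neg`, where `neg` counts the positive symbols in the right half of the unfolding;
each holds because the potential rises by exactly `1` (resp. `2`) when a generator acts at an
ascent, and every element other than `1` has a non-ascent.
The unfolding of a signed permutation is centrally antisymmetric, so its ascents at `i` and
`2n - i` coincide, and `s'_{2n-i}` does not move the symbols `i`, `i + 1` when `i < n`.
-/

open Finset

section WordLength

variable {G : Type*} [Monoid G]

noncomputable def wordLength (S : ℕ → G) (valid : ℕ → Prop) (g : G) : ℕ :=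
  sInf {k | ∃ l : List ℕ, l.length = k ∧ (∀ i ∈ l, valid i) ∧ (l.map S).prod = g}

structure IsLengthPotential (S : ℕ → G) (valid : ℕ → Prop) (P : G → Prop)
    (asc : G → ℕ → Prop) (f : G → ℕ) (c : ℕ) : Prop where
  one : P 1
  mul : ∀ i, valid i → ∀ g, P g → P (S i * g)
  mul_self : ∀ i, valid i → S i * S i = 1
  pos : 0 < c
  map_one : f 1 = 0
  step : ∀ i, valid i → ∀ g, P g → asc g i → f (S i * g) = f g + c
  asc_mul_of_not_asc : ∀ i, valid i → ∀ g, P g → ¬ asc g i → asc (S i * g) i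
  exists_not_asc : ∀ g, P g → g ≠ 1 → ∃ i, valid i ∧ ¬ asc g i

namespace IsLengthPotential

variable {S : ℕ → G} {valid : ℕ → Prop} {P : G → Prop} {asc : G → ℕ → Prop} {f : G → ℕ}
  {c : ℕ}

lemma step_of_not_asc (hf : IsLengthPotential S valid P asc f c) {i : ℕ} (hi : valid i)
    {g : G} (hg : P g) (h : ¬ asc g i) :
    f g = f (S i * g) + c := by
  have := hf.step i hi _ (hf.mul i hi g hg) (hf.asc_mul_of_not_asc i hi g hg h)
  rwa [← mul_assoc, hf.mul_self i hi, one_mul] at this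

lemma prod_map (hf : IsLengthPotential S valid P asc f c) {l : List ℕ}
    (hl : ∀ i ∈ l, valid i) : P (l.map S).prod := by
  induction l with
  | nil => exact hf.one
  | cons i l ih =>
    rw [List.forall_mem_cons] at hl
    exact hf.mul i hl.1 _ (ih hl.2)

lemma le_mul_length (hf : IsLengthPotential S valid P asc f c) {l : List ℕ}
    (hl : ∀ i ∈ l, valid i) : f (l.map S).prod ≤ c * l.length := by
  induction l with
  | nil => simp [hf.map_one]
  | cons i l ih =>
    rw [List.forall_mem_cons] at hl
    have hP := hf.prod_map hl.2
    rw [List.map_cons, List.prod_cons, List.length_cons]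
    by_cases h : asc (l.map S).prod i
    · have := ih hl.2; rw [hf.step i hl.1 _ hP h]; lia
    · have := ih hl.2; have := hf.step_of_not_asc hl.1 hP h; lia

lemma exists_word (hf : IsLengthPotential S valid P asc f c) {g : G} (hg : P g) :
    ∃ l : List ℕ, (∀ i ∈ l, valid i) ∧ (l.map S).prod = g ∧ c * l.length = f g := by
  induction hfg : f g using Nat.strong_induction_on generalizing g with
  | _ m ih =>
  by_cases h1 : g = 1
  · exact ⟨[], by simp, by simp [h1], by simp [← hfg, h1, hf.map_one]⟩
  obtain ⟨i, hi, hasc⟩ := hf.exists_not_asc g hg h1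
  have hstep := hf.step_of_not_asc hi hg hasc
  obtain ⟨l, hl, hprod, hlen⟩ :=
    ih _ (by have := hf.pos; lia) (hf.mul i hi g hg) rfl
  refine ⟨i :: l, ?_, ?_, ?_⟩
  · exact List.forall_mem_cons.2 ⟨hi, hl⟩
  · rw [List.map_cons, List.prod_cons, hprod, ← mul_assoc, hf.mul_self i hi, one_mul]
  · rw [List.length_cons]; lia

lemma mul_wordLength (hf : IsLengthPotential S valid P asc f c) {g : G} (hg : P g) :
    c * wordLength S valid g = f g := by
  obtain ⟨l, hl, hprod, hlen⟩ := hf.exists_word hg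
  have hmem : l.length ∈ {k | ∃ l : List ℕ, l.length = k ∧ (∀ i ∈ l, valid i) ∧
      (l.map S).prod = g} := ⟨l, rfl, hl, hprod⟩
  obtain ⟨l', hl'len, hl', hprod'⟩ := Nat.sInf_mem ⟨_, hmem⟩
  have hmin : wordLength S valid g ≤ l.length := Nat.sInf_le hmem
  have hlow := hf.le_mul_length hl'
  rw [hprod', show l'.length = wordLength S valid g from hl'len] at hlow
  have := Nat.mul_le_mul_left c hmin
  lia

lemma wordLength_lt_iff (hf : IsLengthPotential S valid P asc f c) {i : ℕ} (hi : valid i)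
    {g : G} (hg : P g) :
    wordLength S valid g < wordLength S valid (S i * g) ↔ asc g i := by
  have hlen := hf.mul_wordLength hg
  have hlen' := hf.mul_wordLength (hf.mul i hi g hg)
  rw [← Nat.mul_lt_mul_left hf.pos, hlen, hlen']
  have := hf.pos
  by_cases h : asc g i
  · simp only [h, iff_true, hf.step i hi g hg h]; lia
  · simp only [h, iff_false, hf.step_of_not_asc hi hg h]; lia

end IsLengthPotential

end WordLength

section Inversions

variable {β : Type*} [LinearOrder β]

def inversionCount (s : Finset ℕ) (f : ℕ → β) : ℕ :=
  #{p ∈ s ×ˢ s | p.1 < p.2 ∧ f p.2 < f p.1}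

lemma inversionCount_congr {s : Finset ℕ} {f g : ℕ → β} (h : Set.EqOn f g s) :
    inversionCount s f = inversionCount s g := by
  unfold inversionCount
  congr 1
  refine filter_congr fun p hp => ?_
  rw [mem_product] at hp
  rw [h hp.1, h hp.2]

lemma swap_succ_lt_swap_succ_iff {k x y : ℕ} (h : (x, y) ≠ (k, k + 1))
    (h' : (x, y) ≠ (k + 1, k)) :
    Equiv.swap k (k + 1) x < Equiv.swap k (k + 1) y ↔ x < y := by
  simp only [ne_eq, Prod.mk.injEq] at h h'
  simp only [Equiv.swap_apply_def]
  split_ifs <;> omega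

lemma inversionCount_comp_swap_succ {s : Finset ℕ} {f : ℕ → β} {k : ℕ} (hk : k ∈ s)
    (hk' : k + 1 ∈ s) (h : f k < f (k + 1)) :
    inversionCount s (f ∘ Equiv.swap k (k + 1)) = inversionCount s f + 1 := by
  have hswap_mem : ∀ x, Equiv.swap k (k + 1) x ∈ s ↔ x ∈ s := by
    intro x
    simp only [Equiv.swap_apply_def]
    split_ifs <;> subst_vars <;> simp [hk, hk']
  have hrelabel : inversionCount s (f ∘ Equiv.swap k (k + 1)) =
      #{p ∈ s ×ˢ s | Equiv.swap k (k + 1) p.1 < Equiv.swap k (k + 1) p.2 ∧ f p.2 < f p.1} := by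
    refine card_equiv ((Equiv.swap k (k + 1)).prodCongr (Equiv.swap k (k + 1))) fun p => ?_
    simp [hswap_mem, Equiv.swap_apply_self]
  have hinsert :
      {p ∈ s ×ˢ s | Equiv.swap k (k + 1) p.1 < Equiv.swap k (k + 1) p.2 ∧ f p.2 < f p.1} =
      insert (k + 1, k) {p ∈ s ×ˢ s | p.1 < p.2 ∧ f p.2 < f p.1} := by
    ext ⟨x, y⟩
    by_cases h1 : (x, y) = (k, k + 1)
    · simp_all [h.le]
    by_cases h2 : (x, y) = (k + 1, k)
    · simp_all
    simp only [mem_insert, h2, false_or, mem_filter, swap_succ_lt_swap_succ_iff h1 h2]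
  rw [hrelabel, hinsert, card_insert_of_notMem (by simp)]
  rfl

end Inversions

section PlusMinus

variable {n : ℕ}

lemma isPM_iff {x : ℤ} : IsPM n x ↔ x ≠ 0 ∧ -(n : ℤ) ≤ x ∧ x ≤ n := by
  rw [IsPM, abs_le]

lemma isPM_valB {m : ℕ} (h1 : 1 ≤ m) (h2 : m ≤ 2 * n) : IsPM n (valB n m) := by
  rw [isPM_iff]; unfold valB; split_ifs <;> omega

lemma ordVal_valB {m : ℕ} (h1 : 1 ≤ m) (h2 : m ≤ 2 * n) : ordVal n (valB n m) = m := by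
  unfold valB ordVal; split_ifs <;> omega

lemma valB_toNat_ordVal {x : ℤ} (hx : IsPM n x) : valB n (ordVal n x).toNat = x := by
  rw [isPM_iff] at hx; unfold valB ordVal; split_ifs <;> omega

lemma ordVal_mem_Icc {x : ℤ} (hx : IsPM n x) : 1 ≤ ordVal n x ∧ ordVal n x ≤ 2 * n := by
  rw [isPM_iff] at hx; unfold ordVal; split_ifs <;> omega

lemma ordVal_injOn {x y : ℤ} (hx : IsPM n x) (hy : IsPM n y) (h : ordVal n x = ordVal n y) :
    x = y := by
  rw [isPM_iff] at hx hy; unfold ordVal at h; split_ifs at h <;> omega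

lemma ordVal_neg {x : ℤ} (hx : IsPM n x) : ordVal n (-x) = 2 * n + 1 - ordVal n x := by
  rw [isPM_iff] at hx; unfold ordVal; split_ifs <;> omega

lemma valB_two_mul_add_one_sub {m : ℕ} (h1 : 1 ≤ m) (h2 : m ≤ 2 * n) :
    valB n (2 * n + 1 - m) = -valB n m := by
  unfold valB; split_ifs <;> omega

lemma swap_valB_valB_succ {k m : ℕ} (hk : 1 ≤ k) (hk' : k + 1 ≤ 2 * n) (h1 : 1 ≤ m)
    (h2 : m ≤ 2 * n) :
    Equiv.swap (valB n k) (valB n (k + 1)) (valB n m) = valB n (Equiv.swap k (k + 1) m) := by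
  simp only [Equiv.swap_apply_def, valB]
  split_ifs <;> omega

end PlusMinus

def permsPM (n : ℕ) : Subgroup (Equiv.Perm ℤ) :=
  fixingSubgroup (Equiv.Perm ℤ) {x | IsPM n x}ᶜ

section Generators

variable {n : ℕ}

lemma mem_permsPM_iff {u : Equiv.Perm ℤ} : u ∈ permsPM n ↔ ∀ x, ¬ IsPM n x → u x = x := by
  simp [permsPM, mem_fixingSubgroup_iff, Equiv.Perm.smul_def]

lemma isPM_apply {u : Equiv.Perm ℤ} (hu : u ∈ permsPM n) {x : ℤ} (hx : IsPM n x) :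
    IsPM n (u x) := by
  by_contra h
  rw [u.injective (mem_permsPM_iff.1 hu _ h)] at h
  exact h hx

lemma sA2_mem_permsPM {k : ℕ} (hk : 1 ≤ k) (hk' : k + 1 ≤ 2 * n) : sA2 n k ∈ permsPM n :=
  mem_permsPM_iff.2 fun _ hx => Equiv.swap_apply_of_ne_of_ne
    (fun h => hx (h ▸ isPM_valB hk (by omega))) (fun h => hx (h ▸ isPM_valB (by omega) hk'))

lemma sA2_mul_self (k : ℕ) : sA2 n k * sA2 n k = 1 := Equiv.swap_mul_self _ _

lemma isSignedPerm_one : IsSignedPerm n 1 := ⟨fun _ => rfl, fun _ _ => rfl⟩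

lemma IsSignedPerm.mul {w v : Equiv.Perm ℤ} (hw : IsSignedPerm n w) (hv : IsSignedPerm n v) :
    IsSignedPerm n (w * v) :=
  ⟨fun i => by simp only [Equiv.Perm.mul_apply, hv.1, hw.1],
    fun i hi => by simp only [Equiv.Perm.mul_apply, hv.2 i hi, hw.2 i hi]⟩

lemma IsSignedPerm.inv {w : Equiv.Perm ℤ} (hw : IsSignedPerm n w) : IsSignedPerm n w⁻¹ :=
  ⟨fun i => w.injective (by simp [hw.1]), fun i hi => w.injective (by simp [hw.2 i hi])⟩

lemma IsSignedPerm.mem_permsPM {w : Equiv.Perm ℤ} (hw : IsSignedPerm n w) : w ∈ permsPM n := by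
  refine mem_permsPM_iff.2 fun x hx => ?_
  rw [isPM_iff] at hx
  by_cases h0 : x = 0
  · subst h0
    have := hw.1 0
    simp only [neg_zero] at this
    omega
  · exact hw.2 x (by rw [lt_abs]; omega)

lemma sB_self_eq_sA2 : sB n n = sA2 n n := by
  simp only [sB, le_refl, ite_true, sA2, valB]
  congr 1; split_ifs <;> omega

lemma sB_eq_sA2_mul_sA2 {i : ℕ} (h1 : 1 ≤ i) (h2 : i < n) :
    sB n i = sA2 n i * sA2 n (2 * n - i) := by
  have hswap : Equiv.swap (-(i : ℤ)) (-((i : ℤ) + 1)) = Equiv.swap (-((i : ℤ) + 1)) (-(i : ℤ)) :=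
    Equiv.swap_comm _ _
  simp only [sB, sA2, valB, if_pos h2.le, if_neg h2.ne, hswap]
  congr 2 <;> split_ifs <;> omega

lemma isSignedPerm_sB {i : ℕ} (h1 : 1 ≤ i) (h2 : i ≤ n) : IsSignedPerm n (sB n i) := by
  rcases h2.eq_or_lt with rfl | h2
  · simp only [sB, le_refl, ite_true]
    refine ⟨fun x => ?_, fun x hx => ?_⟩ <;> simp only [Equiv.swap_apply_def]
    · split_ifs <;> omega
    · rw [lt_abs] at hx; split_ifs <;> omega
  · simp only [sB, if_pos h2.le, if_neg h2.ne]
    refine ⟨fun x => ?_, fun x hx => ?_⟩ <;> simp only [Equiv.Perm.mul_apply, Equiv.swap_apply_def]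
    · split_ifs <;> omega
    · rw [lt_abs] at hx; split_ifs <;> omega

lemma sB_mul_self {i : ℕ} (h1 : 1 ≤ i) (h2 : i ≤ n) : sB n i * sB n i = 1 := by
  rcases h2.eq_or_lt with rfl | h2
  · rw [sB_self_eq_sA2, sA2_mul_self]
  · ext x
    simp only [sB, if_pos h2.le, if_neg h2.ne, Equiv.Perm.mul_apply, Equiv.swap_apply_def,
      Equiv.Perm.one_apply]
    split_ifs <;> omega

end Generators

lemma eq_self_of_lt_succ {N : ℕ} {f : ℕ → ℤ} (hf : ∀ m, 1 ≤ m → m ≤ N → 1 ≤ f m ∧ f m ≤ N)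
    (hlt : ∀ m, 1 ≤ m → m + 1 ≤ N → f m < f (m + 1)) {m : ℕ} (h1 : 1 ≤ m) (h2 : m ≤ N) :
    f m = m := by
  have hgap : ∀ j m, 1 ≤ m → m + j ≤ N → f m + j ≤ f (m + j) := by
    intro j
    induction j with
    | zero => simp
    | succ j ih =>
      intro m h1 h2
      have := ih m h1 (by omega)
      have := hlt (m + j) (by omega) (by omega)
      rw [← add_assoc]
      push_cast
      omega
  have hlow := hgap (m - 1) 1 le_rfl (by omega)
  have hup := hgap (N - m) m h1 (by omega)
  rw [show 1 + (m - 1) = m by omega] at hlow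
  rw [show m + (N - m) = N by omega] at hup
  have := (hf 1 le_rfl (by omega)).1
  have := (hf N (by omega) le_rfl).2
  push_cast [h1, h2] at hlow hup
  omega

def posSym (n : ℕ) (u : Equiv.Perm ℤ) (m : ℕ) : ℤ := posB n u (valB n m)

def IsLeftAscent (n : ℕ) (u : Equiv.Perm ℤ) (k : ℕ) : Prop := posSym n u k < posSym n u (k + 1)

instance (n : ℕ) (u : Equiv.Perm ℤ) (k : ℕ) : Decidable (IsLeftAscent n u k) :=
  inferInstanceAs (Decidable (_ < _))

section Positions

variable {n : ℕ} {u : Equiv.Perm ℤ}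

lemma posSym_mem_Icc (hu : u ∈ permsPM n) {m : ℕ} (h1 : 1 ≤ m) (h2 : m ≤ 2 * n) :
    1 ≤ posSym n u m ∧ posSym n u m ≤ 2 * n :=
  ordVal_mem_Icc (isPM_apply (inv_mem hu) (isPM_valB h1 h2))

lemma posSym_injOn (hu : u ∈ permsPM n) {m m' : ℕ} (h1 : 1 ≤ m) (h2 : m ≤ 2 * n) (h1' : 1 ≤ m')
    (h2' : m' ≤ 2 * n) (h : posSym n u m = posSym n u m') : m = m' := by
  have := congrArg (ordVal n) <| u⁻¹.injective <| ordVal_injOn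
    (isPM_apply (inv_mem hu) (isPM_valB h1 h2)) (isPM_apply (inv_mem hu) (isPM_valB h1' h2')) h
  rw [ordVal_valB h1 h2, ordVal_valB h1' h2'] at this
  exact_mod_cast this

lemma posSym_one {m : ℕ} (h1 : 1 ≤ m) (h2 : m ≤ 2 * n) : posSym n 1 m = m := by
  simp [posSym, posB, ordVal_valB h1 h2]

lemma posSym_sA2_mul {k m : ℕ} (hk : 1 ≤ k) (hk' : k + 1 ≤ 2 * n) (h1 : 1 ≤ m) (h2 : m ≤ 2 * n) :
    posSym n (sA2 n k * u) m = posSym n u (Equiv.swap k (k + 1) m) := by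
  simp only [posSym, posB, mul_inv_rev, Equiv.Perm.mul_apply, sA2, Equiv.swap_inv,
    swap_valB_valB_succ hk hk' h1 h2]

lemma posSym_sA2_mul_of_ne {k m : ℕ} (hk : 1 ≤ k) (hk' : k + 1 ≤ 2 * n) (h1 : 1 ≤ m)
    (h2 : m ≤ 2 * n) (hmk : m ≠ k) (hmk' : m ≠ k + 1) :
    posSym n (sA2 n k * u) m = posSym n u m := by
  rw [posSym_sA2_mul hk hk' h1 h2, Equiv.swap_apply_of_ne_of_ne hmk hmk']

lemma IsSignedPerm.posSym_two_mul_add_one_sub (hu : IsSignedPerm n u) {m : ℕ} (h1 : 1 ≤ m)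
    (h2 : m ≤ 2 * n) : posSym n u (2 * n + 1 - m) = 2 * n + 1 - posSym n u m := by
  simp only [posSym, posB, valB_two_mul_add_one_sub h1 h2, hu.inv.1,
    ordVal_neg (isPM_apply hu.inv.mem_permsPM (isPM_valB h1 h2))]

lemma IsSignedPerm.isLeftAscent_two_mul_sub_iff (hu : IsSignedPerm n u) {k : ℕ} (hk : 1 ≤ k)
    (hk' : k + 1 ≤ 2 * n) : IsLeftAscent n u (2 * n - k) ↔ IsLeftAscent n u k := by
  unfold IsLeftAscent
  rw [show 2 * n - k = 2 * n + 1 - (k + 1) by omega,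
    show 2 * n + 1 - (k + 1) + 1 = 2 * n + 1 - k by omega,
    hu.posSym_two_mul_add_one_sub (by omega) hk', hu.posSym_two_mul_add_one_sub hk (by omega)]
  omega

lemma isLeftAscent_sA2_mul_iff (hu : u ∈ permsPM n) {k : ℕ} (hk : 1 ≤ k) (hk' : k + 1 ≤ 2 * n) :
    IsLeftAscent n (sA2 n k * u) k ↔ ¬ IsLeftAscent n u k := by
  unfold IsLeftAscent
  rw [posSym_sA2_mul hk hk' hk (by omega), posSym_sA2_mul hk hk' (by omega) hk',
    Equiv.swap_apply_left, Equiv.swap_apply_right]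
  have := posSym_injOn hu hk (by omega) (by omega) hk' (m' := k + 1)
  omega

lemma isLeftAscent_sA2_two_mul_sub_mul_iff {i : ℕ} (h1 : 1 ≤ i) (h2 : i < n) :
    IsLeftAscent n (sA2 n (2 * n - i) * u) i ↔ IsLeftAscent n u i := by
  unfold IsLeftAscent
  rw [posSym_sA2_mul_of_ne (by omega) (by omega) h1 (by omega) (by omega) (by omega),
    posSym_sA2_mul_of_ne (by omega) (by omega) (by omega) (by omega) (by omega) (by omega)]

lemma eq_one_of_forall_isLeftAscent (hu : u ∈ permsPM n)
    (h : ∀ k, 1 ≤ k → k + 1 ≤ 2 * n → IsLeftAscent n u k) : u = 1 := by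
  have hfix : ∀ m, 1 ≤ m → m ≤ 2 * n → posSym n u m = m := fun m h1 h2 =>
    eq_self_of_lt_succ (fun m h1 h2 => posSym_mem_Icc hu h1 h2) h h1 h2
  have hinv : ∀ x, u⁻¹ x = x := by
    intro x
    by_cases hx : IsPM n x
    · obtain ⟨h1, h2⟩ := ordVal_mem_Icc hx
      have := hfix (ordVal n x).toNat (by omega) (by omega)
      rw [posSym, posB, valB_toNat_ordVal hx] at this
      exact ordVal_injOn (isPM_apply (inv_mem hu) hx) hx (by omega)
    · exact mem_permsPM_iff.1 (inv_mem hu) x hx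
  rw [← inv_inv u, show u⁻¹ = 1 from Equiv.ext hinv, inv_one]

end Positions

def invA (n : ℕ) (u : Equiv.Perm ℤ) : ℕ := inversionCount (Icc 1 (2 * n)) (posSym n u)

def negCount (n : ℕ) (u : Equiv.Perm ℤ) : ℕ := #{m ∈ Icc 1 n | (n : ℤ) < posSym n u m}

section Potentials

variable {n : ℕ} {u : Equiv.Perm ℤ}

lemma invA_one : invA n 1 = 0 := by
  rw [invA, inversionCount, card_eq_zero, filter_eq_empty_iff]
  rintro ⟨x, y⟩ hp
  simp only [mem_product, mem_Icc] at hp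
  rw [posSym_one hp.1.1 hp.1.2, posSym_one hp.2.1 hp.2.2]
  omega

lemma invA_sA2_mul {k : ℕ} (hk : 1 ≤ k) (hk' : k + 1 ≤ 2 * n) (h : IsLeftAscent n u k) :
    invA n (sA2 n k * u) = invA n u + 1 := by
  have hcongr : Set.EqOn (posSym n (sA2 n k * u)) (posSym n u ∘ Equiv.swap k (k + 1))
      (Icc 1 (2 * n)) := fun m hm => by
    rw [coe_Icc, Set.mem_Icc] at hm
    exact posSym_sA2_mul hk hk' hm.1 hm.2
  rw [invA, inversionCount_congr hcongr,
    inversionCount_comp_swap_succ (mem_Icc.2 ⟨hk, by omega⟩) (mem_Icc.2 ⟨by omega, hk'⟩) h,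
    invA]

lemma negCount_one : negCount n 1 = 0 := by
  rw [negCount, card_eq_zero, filter_eq_empty_iff]
  intro m hm
  rw [mem_Icc] at hm
  rw [posSym_one hm.1 (by omega)]
  omega

lemma negCount_sA2_mul_of_ne {k : ℕ} (hk : 1 ≤ k) (hk' : k + 1 ≤ 2 * n) (hkn : k ≠ n) :
    negCount n (sA2 n k * u) = negCount n u := by
  refine card_equiv (Equiv.swap k (k + 1)) fun m => ?_
  have hswap : Equiv.swap k (k + 1) m ∈ Icc 1 n ↔ m ∈ Icc 1 n := by
    simp only [mem_Icc, Equiv.swap_apply_def]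
    split_ifs <;> omega
  simp only [mem_filter, hswap]
  refine and_congr_right fun hm => ?_
  rw [mem_Icc] at hm
  rw [posSym_sA2_mul hk hk' hm.1 (by omega)]

lemma IsSignedPerm.negCount_sA2_mul (hu : IsSignedPerm n u) (hn : 1 ≤ n)
    (h : IsLeftAscent n u n) : negCount n (sA2 n n * u) = negCount n u + 1 := by
  have hmirror := hu.posSym_two_mul_add_one_sub hn (by omega : n ≤ 2 * n)
  rw [show 2 * n + 1 - n = n + 1 by omega] at hmirror
  unfold IsLeftAscent at h
  have hinsert : {m ∈ Icc 1 n | (n : ℤ) < posSym n (sA2 n n * u) m} =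
      insert n {m ∈ Icc 1 n | (n : ℤ) < posSym n u m} := by
    ext m
    simp only [mem_filter, mem_Icc, mem_insert]
    by_cases hm : m = n
    · subst hm
      rw [posSym_sA2_mul hn (by omega) hn (by omega), Equiv.swap_apply_left]
      omega
    by_cases hm' : 1 ≤ m ∧ m ≤ n
    · rw [posSym_sA2_mul_of_ne hn (by omega) hm'.1 (by omega) hm (by omega)]
      tauto
    · tauto
  rw [negCount, hinsert, card_insert_of_notMem fun hmem => by rw [mem_filter] at hmem; omega,
    negCount]

lemma isLengthPotential_invA (n : ℕ) :
    IsLengthPotential (sA2 n) (fun k => 1 ≤ k ∧ k + 1 ≤ 2 * n) (· ∈ permsPM n)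
      (IsLeftAscent n) (invA n) 1 where
  one := one_mem _
  mul _ hk _ hu := mul_mem (sA2_mem_permsPM hk.1 hk.2) hu
  mul_self k _ := sA2_mul_self k
  pos := one_pos
  map_one := invA_one
  step _ hk _ _ h := invA_sA2_mul hk.1 hk.2 h
  asc_mul_of_not_asc _ hk _ hu h := (isLeftAscent_sA2_mul_iff hu hk.1 hk.2).2 h
  exists_not_asc u hu hne := by
    by_contra! h
    exact hne (eq_one_of_forall_isLeftAscent hu fun k h1 h2 => h k ⟨h1, h2⟩)

lemma lengthA2_lt_iff (hu : u ∈ permsPM n) {k : ℕ} (hk : 1 ≤ k) (hk' : k + 1 ≤ 2 * n) :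
    lengthA2 n u < lengthA2 n (sA2 n k * u) ↔ IsLeftAscent n u k :=
  (isLengthPotential_invA n).wordLength_lt_iff ⟨hk, hk'⟩ hu

lemma IsSignedPerm.invA_add_negCount_sB_mul (hu : IsSignedPerm n u) {i : ℕ} (h1 : 1 ≤ i)
    (h2 : i ≤ n) (h : IsLeftAscent n u i) :
    invA n (sB n i * u) + negCount n (sB n i * u) = invA n u + negCount n u + 2 := by
  rcases h2.eq_or_lt with rfl | h2
  · rw [sB_self_eq_sA2, invA_sA2_mul h1 (by omega) h, hu.negCount_sA2_mul h1 h]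
    ring
  · have hmirror := (hu.isLeftAscent_two_mul_sub_iff h1 (by omega)).2 h
    have hkept := (isLeftAscent_sA2_two_mul_sub_mul_iff h1 h2).2 h
    rw [sB_eq_sA2_mul_sA2 h1 h2, mul_assoc, invA_sA2_mul h1 (by omega) hkept,
      invA_sA2_mul (by omega) (by omega) hmirror, negCount_sA2_mul_of_ne h1 (by omega) h2.ne,
      negCount_sA2_mul_of_ne (by omega) (by omega) (by omega)]
    ring

lemma IsSignedPerm.isLeftAscent_sB_mul (hu : IsSignedPerm n u) {i : ℕ} (h1 : 1 ≤ i)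
    (h2 : i ≤ n) (h : ¬ IsLeftAscent n u i) : IsLeftAscent n (sB n i * u) i := by
  rcases h2.eq_or_lt with rfl | h2
  · rw [sB_self_eq_sA2]
    exact (isLeftAscent_sA2_mul_iff hu.mem_permsPM h1 (by omega)).2 h
  · rw [sB_eq_sA2_mul_sA2 h1 h2, mul_assoc]
    refine (isLeftAscent_sA2_mul_iff (mul_mem (sA2_mem_permsPM (by omega) (by omega))
      hu.mem_permsPM) h1 (by omega)).2 ?_
    rwa [isLeftAscent_sA2_two_mul_sub_mul_iff h1 h2]

lemma IsSignedPerm.exists_not_isLeftAscent (hu : IsSignedPerm n u) (hne : u ≠ 1) :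
    ∃ i, (1 ≤ i ∧ i ≤ n) ∧ ¬ IsLeftAscent n u i := by
  obtain ⟨k, ⟨hk, hk'⟩, h⟩ := (isLengthPotential_invA n).exists_not_asc u hu.mem_permsPM hne
  by_cases hkn : k ≤ n
  · exact ⟨k, ⟨hk, hkn⟩, h⟩
  · exact ⟨2 * n - k, ⟨by omega, by omega⟩, by rwa [hu.isLeftAscent_two_mul_sub_iff hk hk']⟩

lemma isLengthPotential_invA_add_negCount (n : ℕ) :
    IsLengthPotential (sB n) (fun i => 1 ≤ i ∧ i ≤ n) (IsSignedPerm n) (IsLeftAscent n)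
      (fun u => invA n u + negCount n u) 2 where
  one := isSignedPerm_one
  mul _ hi _ hu := (isSignedPerm_sB hi.1 hi.2).mul hu
  mul_self _ hi := sB_mul_self hi.1 hi.2
  pos := two_pos
  map_one := by simp only [invA_one, negCount_one]
  step _ hi _ hu h := hu.invA_add_negCount_sB_mul hi.1 hi.2 h
  asc_mul_of_not_asc _ hi _ hu h := hu.isLeftAscent_sB_mul hi.1 hi.2 h
  exists_not_asc _ hu hne := hu.exists_not_isLeftAscent hne

lemma lengthB_lt_iff (hu : IsSignedPerm n u) {i : ℕ} (h1 : 1 ≤ i) (h2 : i ≤ n) :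
    lengthB n u < lengthB n (sB n i * u) ↔ IsLeftAscent n u i :=
  (isLengthPotential_invA_add_negCount n).wordLength_lt_iff ⟨h1, h2⟩ hu

end Potentials

def demazureA (n k : ℕ) (u : Equiv.Perm ℤ) : Equiv.Perm ℤ :=
  if IsLeftAscent n u k then sA2 n k * u else u

def demazureB (n i : ℕ) (u : Equiv.Perm ℤ) : Equiv.Perm ℤ :=
  if IsLeftAscent n u i then sB n i * u else u

section Demazure

variable {n : ℕ} {u : Equiv.Perm ℤ}

lemma demazureA_mem_permsPM (hu : u ∈ permsPM n) {k : ℕ} (hk : 1 ≤ k) (hk' : k + 1 ≤ 2 * n) :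
    demazureA n k u ∈ permsPM n := by
  unfold demazureA
  split_ifs
  exacts [mul_mem (sA2_mem_permsPM hk hk') hu, hu]

lemma isSignedPerm_demazureB (hu : IsSignedPerm n u) {i : ℕ} (h1 : 1 ≤ i) (h2 : i ≤ n) :
    IsSignedPerm n (demazureB n i u) := by
  unfold demazureB
  split_ifs
  exacts [(isSignedPerm_sB h1 h2).mul hu, hu]

lemma IsSignedPerm.demazureA_demazureA_two_mul_sub (hu : IsSignedPerm n u) {i : ℕ} (h1 : 1 ≤ i)
    (h2 : i ≤ n) : demazureA n i (demazureA n (2 * n - i) u) = demazureB n i u := by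
  have hmirror := hu.isLeftAscent_two_mul_sub_iff h1 (by omega)
  by_cases h : IsLeftAscent n u i
  · rcases h2.eq_or_lt with rfl | h2
    · have hdesc := (isLeftAscent_sA2_mul_iff hu.mem_permsPM h1 (by omega)).not.2 (not_not.2 h)
      rw [show 2 * i - i = i by omega]
      simp only [demazureA, demazureB, h, hdesc, if_true, if_false, sB_self_eq_sA2]
    · have hkept := (isLeftAscent_sA2_two_mul_sub_mul_iff h1 h2).2 h
      simp only [demazureA, demazureB, h, hmirror.2 h, hkept, if_true,
        sB_eq_sA2_mul_sA2 h1 h2, mul_assoc]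
  · simp only [demazureA, demazureB, h, mt hmirror.1 h, if_false]

lemma IsSignedPerm.exists_demazureB_eq {w : Equiv.Perm ℤ} (hw : IsSignedPerm n w) (hne : w ≠ 1) :
    ∃ i w', 1 ≤ i ∧ i ≤ n ∧ IsSignedPerm n w' ∧ lengthB n w' < lengthB n w ∧
      demazureB n i w' = w := by
  obtain ⟨i, ⟨h1, h2⟩, h⟩ := hw.exists_not_isLeftAscent hne
  have hw' := (isSignedPerm_sB h1 h2).mul hw
  have hasc := hw.isLeftAscent_sB_mul h1 h2 h
  have hback : sB n i * (sB n i * w) = w := by rw [← mul_assoc, sB_mul_self h1 h2, one_mul]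
  refine ⟨i, sB n i * w, h1, h2, hw', ?_, ?_⟩
  · simpa only [hback] using (lengthB_lt_iff hw' h1 h2).2 hasc
  · rw [demazureB, if_pos hasc, hback]

end Demazure

/-- for signed permutations `w, v ∈ B_n`,
`w ⋆_B v = fold (unfold w ⋆_A unfold v)`; in particular
`unfold w ⋆_A unfold v` lies in the image of `unfold`, i.e. is again a signed
permutation.  Here `⋆_B` (resp. `⋆_A`) is the Demazure product of `B_n`
(resp. of `S_{2n}`), each encoded as an arbitrary associative product with
unit `1` satisfying the defining rule on the respective simple generators. -/
theorem demazure_fold_unfold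
    (n : ℕ) (w v : Equiv.Perm ℤ) (hw : IsSignedPerm n w) (hv : IsSignedPerm n v)
    (starB : Equiv.Perm ℤ → Equiv.Perm ℤ → Equiv.Perm ℤ)
    (hassocB : ∀ a b c, starB (starB a b) c = starB a (starB b c))
    (hunitB : ∀ a, starB 1 a = a)
    (hgenB : ∀ i, 1 ≤ i → i ≤ n → ∀ u,
      starB (sB n i) u = if lengthB n u < lengthB n (sB n i * u) then sB n i * u else u)
    (starA : Equiv.Perm ℤ → Equiv.Perm ℤ → Equiv.Perm ℤ)
    (hassocA : ∀ a b c, starA (starA a b) c = starA a (starA b c))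
    (hunitA : ∀ a, starA 1 a = a)
    (hgenA : ∀ k, 1 ≤ k → k + 1 ≤ 2 * n → ∀ u,
      starA (sA2 n k) u = if lengthA2 n u < lengthA2 n (sA2 n k * u) then sA2 n k * u else u) :
    starB w v = starA w v ∧ IsSignedPerm n (starA w v) := by
  have hB : ∀ i u, 1 ≤ i → i ≤ n → IsSignedPerm n u → starB (sB n i) u = demazureB n i u := by
    intro i u h1 h2 hu
    simp only [hgenB i h1 h2, lengthB_lt_iff hu h1 h2, demazureB]
  have hA : ∀ k u, 1 ≤ k → k + 1 ≤ 2 * n → u ∈ permsPM n → starA (sA2 n k) u = demazureA n k u := by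
    intro k u hk hk' hu
    simp only [hgenA k hk hk', lengthA2_lt_iff hu hk hk', demazureA]
  have hAB : ∀ i u, 1 ≤ i → i ≤ n → IsSignedPerm n u →
      starA (sA2 n i) (starA (sA2 n (2 * n - i)) u) = demazureB n i u := by
    intro i u h1 h2 hu
    rw [hA _ u (by omega) (by omega) hu.mem_permsPM,
      hA i _ h1 (by omega) (demazureA_mem_permsPM hu.mem_permsPM (by omega) (by omega)),
      hu.demazureA_demazureA_two_mul_sub h1 h2]
  induction hlen : lengthB n w using Nat.strong_induction_on generalizing w with
  | _ m ih =>
  by_cases hw1 : w = 1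
  · subst hw1
    rw [hunitB, hunitA]
    exact ⟨rfl, hv⟩
  obtain ⟨i, w', h1, h2, hw', hlt, rfl⟩ := hw.exists_demazureB_eq hw1
  obtain ⟨ihB, ihA⟩ := ih _ (hlen ▸ hlt) w' hw' rfl
  have hstarB : starB (demazureB n i w') v = demazureB n i (starA w' v) := by
    rw [← hB i w' h1 h2 hw', hassocB, ihB, hB i _ h1 h2 ihA]
  have hstarA : starA (demazureB n i w') v = demazureB n i (starA w' v) := by
    rw [← hAB i w' h1 h2 hw', hassocA, hassocA, hAB i _ h1 h2 ihA]
  rw [hstarB, hstarA]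
  exact ⟨rfl, isSignedPerm_demazureB ihA h1 h2⟩
end
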